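/- arXiv:1707.05421 — 4 statements merged into one kernel-verified Lean document; each statement's English description precedes it below -/
import Mathlib

section
/- (Conditional Kac lemma) Let (X_n, Y_n)_{n∈ℤ} be a jointly stationary process on finite alphabets. Fix L ≥ 1 and strings x ∈ 𝒜^L, y ∈ ℬ^L with P[X_1^L = x, Y_1^L = y] > 0. Let T = min{t ≥ 1 : (X,Y)_{1−t}^{L−t} = (x,y)} be the first joint recurrence time into (x,y), and let C = |{t ∈ [1,T] : Y_{1−t}^{L−t} = y}| be the number of Y-matches up to time T. Then E[C | X_1^L = x, Y_1^L = y] ≤ 1 / P[X_1^L = x | Y_1^L = y]. -/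
open MeasureTheory
open scoped ENNReal

/-- Conditional Kac lemma.  For a jointly stationary process `(X, Y)` on finite alphabets
(stationarity is expressed via a measure-preserving shift `σ`), strings `x, y` of length
`L` with positive joint probability, first joint recurrence time `T` and number of
`Y`-matches `C` up to time `T`, one has
`E[C | X₁^L = x, Y₁^L = y] ≤ 1 / P[X₁^L = x | Y₁^L = y]`. -/
theorem stmt_2 {Ω A B : Type*} [MeasurableSpace Ω]
    (μ : Measure Ω) [IsProbabilityMeasure μ]
    [Fintype A] [Fintype B]
    [MeasurableSpace A] [MeasurableSingletonClass A]
    [MeasurableSpace B] [MeasurableSingletonClass B]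
    (X : ℤ → Ω → A) (Y : ℤ → Ω → B)
    (hmX : ∀ n, Measurable (X n)) (hmY : ∀ n, Measurable (Y n))
    (σ : Ω → Ω) (hσ : MeasurePreserving σ μ μ)
    (hX : ∀ n ω, X n (σ ω) = X (n + 1) ω)
    (hY : ∀ n ω, Y n (σ ω) = Y (n + 1) ω)
    (L : ℕ) (hL : 1 ≤ L) (x : Fin L → A) (y : Fin L → B)
    (Exy Ey : Set Ω)
    (hExy : Exy = {ω | ∀ i : Fin L,
      X (1 + (i : ℕ) : ℤ) ω = x i ∧ Y (1 + (i : ℕ) : ℤ) ω = y i})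
    (hEy : Ey = {ω | ∀ i : Fin L, Y (1 + (i : ℕ) : ℤ) ω = y i})
    (hpos : 0 < μ Exy)
    (T : Ω → ℕ)
    (hT : ∀ ω, T ω = sInf {t : ℕ | 1 ≤ t ∧ ∀ i : Fin L,
      X (1 + (i : ℕ) - (t : ℕ) : ℤ) ω = x i ∧ Y (1 + (i : ℕ) - (t : ℕ) : ℤ) ω = y i})
    (C : Ω → ℕ)
    (hC : ∀ ω, C ω = Nat.card {t : ℕ | 1 ≤ t ∧ t ≤ T ω ∧
      ∀ i : Fin L, Y (1 + (i : ℕ) - (t : ℕ) : ℤ) ω = y i}) :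
    (∫ ω in Exy, (C ω : ℝ) ∂μ) / (μ Exy).toReal
      ≤ 1 / ((μ Exy).toReal / (μ Ey).toReal) := by
  classical
  have hσm : Measurable σ := hσ.measurable
  -- iterated shift acts on the coordinates
  have hXs : ∀ (t : ℕ) (n : ℤ) (ω : Ω), X n (σ^[t] ω) = X (n + t) ω := by
    intro t
    induction t with
    | zero => intro n ω; simp
    | succ t ih =>
      intro n ω
      rw [Function.iterate_succ_apply, ih, hX]
      congr 1
      push_cast
      ring
  have hYs : ∀ (t : ℕ) (n : ℤ) (ω : Ω), Y n (σ^[t] ω) = Y (n + t) ω := by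
    intro t
    induction t with
    | zero => intro n ω; simp
    | succ t ih =>
      intro n ω
      rw [Function.iterate_succ_apply, ih, hY]
      congr 1
      push_cast
      ring
  -- the backward-shifted events
  set E : ℕ → Set Ω := fun t => {ω | ∀ i : Fin L,
      X (1 + (i : ℕ) - (t : ℕ) : ℤ) ω = x i ∧ Y (1 + (i : ℕ) - (t : ℕ) : ℤ) ω = y i}
    with hE
  set F : ℕ → Set Ω := fun t => {ω | ∀ i : Fin L,
      Y (1 + (i : ℕ) - (t : ℕ) : ℤ) ω = y i} with hF
  have hE0 : E 0 = Exy := by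
    rw [hE, hExy]; ext ω; simp
  have hF0 : F 0 = Ey := by
    rw [hF, hEy]; ext ω; simp
  have hT' : ∀ ω, T ω = sInf {t : ℕ | 1 ≤ t ∧ ω ∈ E t} := hT
  have hC' : ∀ ω, C ω = Nat.card {t : ℕ | 1 ≤ t ∧ t ≤ T ω ∧ ω ∈ F t} := hC
  -- shift-equivariance of the events
  have hEshift : ∀ (s t : ℕ) (ω : Ω), σ^[t] ω ∈ E (s + t) ↔ ω ∈ E s := by
    intro s t ω
    simp only [hE, Set.mem_setOf_eq, hXs, hYs]
    have hidx : ∀ i : Fin L,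
        (1 + (i : ℕ) - ((s + t : ℕ) : ℤ) + (t : ℕ) : ℤ) = 1 + (i : ℕ) - (s : ℕ) := by
      intro i; push_cast; ring
    constructor <;> intro h i <;> [skip; skip] <;>
      · have := h i
        rw [hidx i] at * <;> tauto
  have hFshift : ∀ (s t : ℕ) (ω : Ω), σ^[t] ω ∈ F (s + t) ↔ ω ∈ F s := by
    intro s t ω
    simp only [hF, Set.mem_setOf_eq, hYs]
    have hidx : ∀ i : Fin L,
        (1 + (i : ℕ) - ((s + t : ℕ) : ℤ) + (t : ℕ) : ℤ) = 1 + (i : ℕ) - (s : ℕ) := by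
      intro i; push_cast; ring
    constructor <;> intro h i <;>
      · have := h i
        rw [hidx i] at * <;> tauto
  -- measurability of the events
  have hEm : ∀ t, MeasurableSet (E t) := by
    intro t
    have : E t = ⋂ i : Fin L,
        (X (1 + (i : ℕ) - (t : ℕ) : ℤ) ⁻¹' {x i} ∩
          Y (1 + (i : ℕ) - (t : ℕ) : ℤ) ⁻¹' {y i}) := by
      ext ω; simp [hE, forall_and]
    rw [this]
    exact MeasurableSet.iInter fun i =>
      ((hmX _ (measurableSet_singleton _)).inter (hmY _ (measurableSet_singleton _)))
  have hFm : ∀ t, MeasurableSet (F t) := by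
    intro t
    have : F t = ⋂ i : Fin L, Y (1 + (i : ℕ) - (t : ℕ) : ℤ) ⁻¹' {y i} := by
      ext ω; simp [hF]
    rw [this]
    exact MeasurableSet.iInter fun i => hmY _ (measurableSet_singleton _)
  have hExym : MeasurableSet Exy := hE0 ▸ hEm 0
  have hEym : MeasurableSet Ey := hF0 ▸ hFm 0
  -- the set {t ≤ T} is measurable
  have hTset : ∀ t : ℕ, 1 ≤ t → {ω | t ≤ T ω} =
      (⋃ s, ⋃ (_ : 1 ≤ s), E s) ∩ ⋂ s ∈ Set.Ico 1 t, (E s)ᶜ := by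
    intro t ht
    ext ω
    simp only [Set.mem_setOf_eq, Set.mem_inter_iff, Set.mem_iUnion, Set.mem_iInter,
      Set.mem_Ico, Set.mem_compl_iff]
    rw [hT']
    constructor
    · intro h
      have hne : {s : ℕ | 1 ≤ s ∧ ω ∈ E s}.Nonempty := by
        by_contra hcon
        rw [Set.not_nonempty_iff_eq_empty] at hcon
        rw [hcon, Nat.sInf_empty] at h
        omega
      have hmem := Nat.sInf_mem hne
      refine ⟨⟨_, hmem.1, hmem.2⟩, ?_⟩
      rintro s ⟨hs1, hst⟩ hsE
      have hmemS : s ∈ {u : ℕ | 1 ≤ u ∧ ω ∈ E u} := ⟨hs1, hsE⟩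
      have := Nat.sInf_le hmemS
      omega
    · rintro ⟨⟨s, hs1, hsE⟩, h2⟩
      have hne : {s : ℕ | 1 ≤ s ∧ ω ∈ E s}.Nonempty := ⟨s, hs1, hsE⟩
      have hmem := Nat.sInf_mem hne
      by_contra hcon
      exact h2 _ ⟨hmem.1, by omega⟩ hmem.2
  have hTm : ∀ t : ℕ, MeasurableSet {ω | t ≤ T ω} := by
    intro t
    rcases Nat.eq_zero_or_pos t with h0 | h1
    · subst h0; simp
    · rw [hTset t h1]
      exact ((MeasurableSet.iUnion fun s => MeasurableSet.iUnion fun _ => hEm s).inter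
        (MeasurableSet.biInter (Set.Ico 1 t).to_countable fun s _ => (hEm s).compl))
  -- the counting sets
  set G : ℕ → Set Ω := fun t => {ω | 1 ≤ t ∧ t ≤ T ω ∧ ω ∈ F t} with hG
  have hGm : ∀ t, MeasurableSet (G t) := by
    intro t
    rcases Nat.eq_zero_or_pos t with h0 | h1
    · subst h0
      have : G 0 = ∅ := by ext ω; simp [hG]
      rw [this]; exact MeasurableSet.empty
    · have : G t = {ω | t ≤ T ω} ∩ F t := by
        ext ω; simp [hG, h1, and_comm]
        tauto
      rw [this]; exact (hTm t).inter (hFm t)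
  -- C as a sum of indicators
  have hCsum : ∀ ω, (C ω : ℝ≥0∞) = ∑' t : ℕ, (G t).indicator 1 ω := by
    intro ω
    have hGmem : ∀ t, ω ∈ G t ↔ (1 ≤ t ∧ t ≤ T ω ∧ ω ∈ F t) := fun t => Iff.rfl
    set s : Finset ℕ := (Finset.Icc 1 (T ω)).filter (fun t => ω ∈ F t) with hs
    have hset : {t : ℕ | 1 ≤ t ∧ t ≤ T ω ∧ ω ∈ F t} = ↑s := by
      ext t; simp [hs, Finset.mem_filter, Finset.mem_Icc]; tauto
    have hC2 : C ω = s.card := by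
      rw [hC' ω, hset]; exact Nat.card_eq_finsetCard s
    have htsum : ∑' t : ℕ, (G t).indicator (1 : Ω → ℝ≥0∞) ω
        = ∑ t ∈ Finset.Icc 1 (T ω), (G t).indicator 1 ω := by
      apply tsum_eq_sum
      intro t ht
      rw [Finset.mem_Icc] at ht
      have : ω ∉ G t := by
        intro hmem
        rw [hGmem] at hmem
        exact ht ⟨hmem.1, hmem.2.1⟩
      simp [Set.indicator_of_notMem this]
    rw [hC2, htsum]
    have : ∀ t ∈ Finset.Icc 1 (T ω), (G t).indicator (1 : Ω → ℝ≥0∞) ω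
        = if ω ∈ F t then 1 else 0 := by
      intro t ht
      rw [Finset.mem_Icc] at ht
      by_cases hFt : ω ∈ F t
      · rw [Set.indicator_of_mem (by exact ⟨ht.1, ht.2, hFt⟩) 1]
        simp [hFt]
      · rw [Set.indicator_of_notMem (by simp [hGmem, hFt]) 1]
        simp [hFt]
    rw [Finset.sum_congr rfl this, ← Finset.sum_filter, ← hs]
    simp
  -- measurability of C
  have hCmE : Measurable (fun ω => (C ω : ℝ≥0∞)) := by
    have : (fun ω => (C ω : ℝ≥0∞)) = fun ω => ∑' t : ℕ, (G t).indicator 1 ω := by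
      funext ω; exact hCsum ω
    rw [this]
    exact Measurable.ennreal_tsum fun t => measurable_const.indicator (hGm t)
  have hCm : Measurable C := by
    apply measurable_to_countable'
    intro n
    have : C ⁻¹' {n} = (fun ω => (C ω : ℝ≥0∞)) ⁻¹' {(n : ℝ≥0∞)} := by
      ext ω; simp [Nat.cast_inj]
    rw [this]
    exact hCmE (measurableSet_singleton _)
  -- the key bound: ∫ C over Exy ≤ μ Ey
  have hmain : ∫⁻ ω in Exy, (C ω : ℝ≥0∞) ∂μ ≤ μ Ey := by
    have h1 : ∫⁻ ω in Exy, (C ω : ℝ≥0∞) ∂μ = ∑' t : ℕ, μ (G t ∩ Exy) := by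
      calc ∫⁻ ω in Exy, (C ω : ℝ≥0∞) ∂μ
          = ∫⁻ ω in Exy, ∑' t : ℕ, (G t).indicator 1 ω ∂μ := by
            apply lintegral_congr; intro ω; exact hCsum ω
        _ = ∑' t : ℕ, ∫⁻ ω in Exy, (G t).indicator 1 ω ∂μ :=
            lintegral_tsum fun t => (measurable_const.indicator (hGm t)).aemeasurable
        _ = ∑' t : ℕ, μ (G t ∩ Exy) := by
            congr 1; funext t
            rw [lintegral_indicator_one (hGm t), Measure.restrict_apply (hGm t)]
    rw [h1]
    -- pull back by σ^[t]
    have h2 : ∀ t : ℕ, μ (G t ∩ Exy) = μ (σ^[t] ⁻¹' (G t ∩ Exy)) := by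
      intro t
      exact ((hσ.iterate t).measure_preimage ((hGm t).inter hExym).nullMeasurableSet).symm
    have hsub : ∀ t : ℕ, σ^[t] ⁻¹' (G t ∩ Exy) ⊆ Ey := by
      intro t ω hω
      obtain ⟨⟨ht1, htT, htF⟩, hExy'⟩ := hω
      have : σ^[t] ω ∈ F (0 + t) := by rwa [zero_add]
      rw [hFshift 0 t ω] at this
      rwa [hF0] at this
    have hdisj : Pairwise (Function.onFun Disjoint fun t => σ^[t] ⁻¹' (G t ∩ Exy)) := by
      have key : ∀ t t' : ℕ, t < t' →
          ∀ ω, ω ∈ σ^[t] ⁻¹' (G t ∩ Exy) → ω ∈ σ^[t'] ⁻¹' (G t' ∩ Exy) → False := by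
        intro t t' htt' ω h h'
        obtain ⟨⟨ht1, htT, htF⟩, hXY⟩ := h
        obtain ⟨⟨ht1', htT', htF'⟩, hXY'⟩ := h'
        -- σ^[t] ω ∈ Exy = E 0, so σ^[t'] ω ∈ E (t' - t)
        have hE0' : σ^[t] ω ∈ E 0 := by rwa [hE0]
        have hiter : σ^[t'] ω = σ^[t' - t] (σ^[t] ω) := by
          rw [← Function.iterate_add_apply]
          congr 1
          omega
        have hEmem : σ^[t'] ω ∈ E (t' - t) := by
          rw [hiter]
          have := (hEshift 0 (t' - t) (σ^[t] ω)).mpr hE0'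
          rwa [zero_add] at this
        have hle : T (σ^[t'] ω) ≤ t' - t := by
          rw [hT']
          have hmemS : t' - t ∈ {u : ℕ | 1 ≤ u ∧ σ^[t'] ω ∈ E u} := ⟨by omega, hEmem⟩
          exact Nat.sInf_le hmemS
        omega
      intro t t' hne
      rcases lt_or_gt_of_ne hne with h | h
      · exact Set.disjoint_left.mpr fun ω hω hω' => key t t' h ω hω hω'
      · exact Set.disjoint_left.mpr fun ω hω hω' => key t' t h ω hω' hω
    calc ∑' t : ℕ, μ (G t ∩ Exy) = ∑' t : ℕ, μ (σ^[t] ⁻¹' (G t ∩ Exy)) := by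
          congr 1; funext t; exact h2 t
      _ = μ (⋃ t : ℕ, σ^[t] ⁻¹' (G t ∩ Exy)) := by
          rw [measure_iUnion hdisj fun t =>
            (hσm.iterate t) ((hGm t).inter hExym)]
      _ ≤ μ Ey := measure_mono (Set.iUnion_subset hsub)
  -- convert to real integrals
  have hint : ∫ ω in Exy, (C ω : ℝ) ∂μ ≤ (μ Ey).toReal := by
    have heq : ∫ ω in Exy, (C ω : ℝ) ∂μ = (∫⁻ ω in Exy, (C ω : ℝ≥0∞) ∂μ).toReal := by
      have hCmR : Measurable (fun ω : Ω => (C ω : ℝ)) := by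
        exact measurable_from_top.comp hCm
      rw [integral_eq_lintegral_of_nonneg_ae
        (Filter.Eventually.of_forall fun ω => by
          show (0:ℝ) ≤ (C ω : ℝ); positivity)
        hCmR.aestronglyMeasurable]
      congr 1
      apply lintegral_congr
      intro ω
      exact ENNReal.ofReal_natCast (C ω)
    rw [heq]
    exact ENNReal.toReal_mono (measure_ne_top μ Ey) hmain
  -- final arithmetic
  have hp : 0 < (μ Exy).toReal :=
    ENNReal.toReal_pos hpos.ne' (measure_ne_top μ Exy)
  rw [one_div_div]
  rw [div_le_div_iff_of_pos_right hp]
  exact hint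
end

section
/- Let (Y_n)_{n∈ℤ} be stationary, L ≥ 1, y ∈ ℬ^L with positive probability, and let T_0 = 0 < T_1 < T_2 < ⋯ be the successive backward recurrence times of the block y: T_j = min{t > T_{j−1} : Y_{1−t}^{L−t} = y}. Then for all n, t ≥ 1, P[T_n − T_{n−1} = t, Y_1^L = y] = P[T_1 = t, Y_1^L = y]; consequently E[T_j | Y_1^L = y] = j · E[T_1 | Y_1^L = y]. -/
/-!
Write `occ k` for the event that the block occurs at lag `k`, i.e. `Y_{1-k}^{L-k} = y`; positive
lags lie in the past, and the shift translates lags: `σ ω ∈ occ k ↔ ω ∈ occ (k - 1)`.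

On `occ 0`, the event `{T_m = s, T_{m+1} = s + t}` says that the block occurs at lags `0`, `s`,
`s + t`, that `m` occurrences lie in `[0, s)` and exactly one in `[s, s + t)`. Pulled back by
`σ^[s]` it becomes: the block occurs at `-s` and `0` with `m` occurrences in `[-s, 0)`, and the
first backward return from `0` is at `t`. Summing over `s`, the left-hand events partition
`{T_{m+1} - T_m = t} ∩ occ 0` and the right-hand events partition `{T_1 = t} ∩ occ 0`, both up to
null sets: by recurrence of the finite measure-preserving map `σ`, almost every point of `occ 0`
sees the block infinitely often both in the past and in the future. The identity for expectations
follows by telescoping `T_j` into its `j` gaps.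
-/

open MeasureTheory Filter Finset Function
open scoped ENNReal

namespace BlockRecurrence

variable {Ω : Type*} (occ : ℤ → Set Ω)

noncomputable def occCount (ω : Ω) (a : ℤ) (n : ℕ) : ℕ :=
  ∑ u ∈ range n, (occ (a + u)).indicator 1 ω

/-- `ω ∈ returnAt occ a n m`: the block occurs at lag `a`, and its `m`-th occurrence after `a`
is at lag `a + n` (the occurrence at `a` itself being the `0`-th). -/
def returnAt (a : ℤ) (n m : ℕ) : Set Ω :=
  occ a ∩ occ (a + n) ∩ {ω | occCount occ ω a n = m}

noncomputable def recTime : ℕ → Ω → ℕ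
  | 0, _ => 0
  | j + 1, ω => sInf {t | recTime j ω < t ∧ ω ∈ occ t}

variable {occ} {ω : Ω} {a : ℤ} {n : ℕ}

lemma occCount_add (a : ℤ) (n k : ℕ) :
    occCount occ ω a (n + k) = occCount occ ω a n + occCount occ ω (a + n) k := by
  simp only [occCount, sum_range_add, Nat.cast_add, add_assoc]

lemma occCount_eq_zero_iff : occCount occ ω a n = 0 ↔ ∀ u < n, ω ∉ occ (a + u) := by
  simp [occCount, Set.indicator_apply_eq_zero]

lemma occCount_one (h : ω ∈ occ a) : occCount occ ω a 1 = 1 := by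
  simp [occCount, h]

lemma occCount_pos (h : ω ∈ occ a) (hn : 0 < n) : 0 < occCount occ ω a n := by
  rw [Nat.pos_iff_ne_zero, Ne, occCount_eq_zero_iff]
  exact fun hall => hall 0 hn (by simpa using h)

lemma occCount_eq_one_iff (h : ω ∈ occ a) (hn : 0 < n) :
    occCount occ ω a n = 1 ↔ ∀ u, 0 < u → u < n → ω ∉ occ (a + u) := by
  obtain ⟨k, rfl⟩ := Nat.exists_eq_add_of_lt hn
  rw [zero_add, add_comm, occCount_add, occCount_one h, add_eq_left, occCount_eq_zero_iff]
  constructor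
  · rintro hk (_ | u) hu hlt
    · exact absurd hu (lt_irrefl 0)
    · simpa [add_assoc, add_comm (1 : ℤ)] using hk u (by omega)
  · intro hk u hu
    simpa [add_assoc, add_comm (1 : ℤ)] using hk (u + 1) u.succ_pos (by omega)

lemma mem_returnAt_add_iff {k l m : ℕ} (h : ω ∈ returnAt occ a n l) :
    ω ∈ returnAt occ a (n + k) (l + m) ↔ ω ∈ returnAt occ (a + n) k m := by
  obtain ⟨⟨ha, han⟩, hl : occCount occ ω a n = l⟩ := h
  simp only [returnAt, Set.mem_inter_iff, Set.mem_ofPred_eq, occCount_add, hl, Nat.cast_add,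
    add_assoc, ha, han, true_and, add_right_inj]

lemma pairwise_disjoint_returnAt (a : ℤ) (m : ℕ) :
    Pairwise (Disjoint on fun n => returnAt occ a n m) := by
  refine (pairwise_disjoint_on _).2 fun n n' hlt => Set.disjoint_left.2 fun ω h h' => ?_
  obtain ⟨k, rfl⟩ := Nat.exists_eq_add_of_lt hlt
  have hpos := occCount_pos h.1.2 (n := k + 1) (by omega)
  have hsplit := occCount_add (occ := occ) (ω := ω) a n (k + 1)
  rw [← add_assoc, h'.2, h.2] at hsplit
  omega

lemma pairwise_disjoint_returnAt_sub (b : ℤ) (m : ℕ) :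
    Pairwise (Disjoint on fun n : ℕ => returnAt occ (b - n) n m) := by
  refine (pairwise_disjoint_on _).2 fun n n' hlt => Set.disjoint_left.2 fun ω h h' => ?_
  obtain ⟨k, rfl⟩ := Nat.exists_eq_add_of_lt hlt
  have hpos := occCount_pos h'.1.1 (n := k + 1) (by omega)
  have hsplit := occCount_add (occ := occ) (ω := ω) (b - ↑(n + k + 1)) (k + 1) n
  rw [add_comm (k + 1), ← add_assoc, h'.2,
    show b - ↑(n + k + 1) + ↑(k + 1) = b - n by push_cast; ring, h.2] at hsplit
  omega

lemma recTime_succ_mem (hinf : ∃ᶠ t : ℕ in atTop, ω ∈ occ t) (j : ℕ) :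
    recTime occ j ω < recTime occ (j + 1) ω ∧ ω ∈ occ (recTime occ (j + 1) ω) := by
  obtain ⟨t, ht, ht_mem⟩ := frequently_atTop.1 hinf (recTime occ j ω + 1)
  exact Nat.sInf_mem (s := {t | recTime occ j ω < t ∧ ω ∈ occ t}) ⟨t, ht, ht_mem⟩

lemma mem_returnAt_recTime_succ (hinf : ∃ᶠ t : ℕ in atTop, ω ∈ occ t) {j : ℕ}
    (hj : ω ∈ occ (recTime occ j ω)) :
    ω ∈ returnAt occ (recTime occ j ω) (recTime occ (j + 1) ω - recTime occ j ω) 1 := by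
  obtain ⟨hlt, hmem⟩ := recTime_succ_mem hinf j
  refine ⟨⟨hj, by rwa [← Nat.cast_add, Nat.add_sub_cancel' hlt.le]⟩, ?_⟩
  refine (occCount_eq_one_iff hj (Nat.sub_pos_of_lt hlt)).2 fun u hu hut hu_mem => ?_
  have hgap : recTime occ j ω + u < recTime occ (j + 1) ω := by omega
  exact Nat.notMem_of_lt_sInf hgap ⟨by omega, by exact_mod_cast hu_mem⟩

lemma mem_returnAt_recTime (h0 : ω ∈ occ 0) (hinf : ∃ᶠ t : ℕ in atTop, ω ∈ occ t) (j : ℕ) :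
    ω ∈ returnAt occ 0 (recTime occ j ω) j := by
  induction j with
  | zero => simpa [returnAt, recTime, occCount] using h0
  | succ j ih =>
    have hle := (recTime_succ_mem hinf j).1.le
    have hstep := mem_returnAt_recTime_succ hinf (by simpa using ih.1.2)
    rw [← zero_add (recTime occ j ω : ℤ)] at hstep
    simpa [Nat.add_sub_cancel' hle] using (mem_returnAt_add_iff ih).2 hstep

lemma recTime_eq_iff (h0 : ω ∈ occ 0) (hinf : ∃ᶠ t : ℕ in atTop, ω ∈ occ t) {j : ℕ} :
    recTime occ j ω = n ↔ ω ∈ returnAt occ 0 n j := by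
  refine ⟨fun h => h ▸ mem_returnAt_recTime h0 hinf j, fun h => ?_⟩
  by_contra hne
  exact Set.disjoint_left.1 (pairwise_disjoint_returnAt 0 j hne) (mem_returnAt_recTime h0 hinf j) h

lemma recTime_succ_sub_eq_iff (h0 : ω ∈ occ 0) (hinf : ∃ᶠ t : ℕ in atTop, ω ∈ occ t) {m t : ℕ} :
    recTime occ (m + 1) ω - recTime occ m ω = t ↔
      ∃ n, ω ∈ returnAt occ 0 n m ∩ returnAt occ n t 1 := by
  have hlt := (recTime_succ_mem hinf m).1
  constructor
  · rintro rfl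
    have hm := mem_returnAt_recTime h0 hinf m
    have hm1 := mem_returnAt_recTime h0 hinf (m + 1)
    rw [← Nat.add_sub_cancel' hlt.le] at hm1
    refine ⟨_, hm, ?_⟩
    simpa using (mem_returnAt_add_iff hm).1 hm1
  · rintro ⟨n, hn, hnt⟩
    have hm := (recTime_eq_iff h0 hinf).2 hn
    have hm1 := (recTime_eq_iff h0 hinf).2 ((mem_returnAt_add_iff hn).2 (by simpa using hnt))
    omega

lemma exists_mem_returnAt_sub {b : ℤ} (hb : ω ∈ occ b)
    (hinf : ∃ᶠ t : ℕ in atTop, ω ∈ occ (b - t)) (m : ℕ) :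
    ∃ n : ℕ, ω ∈ returnAt occ (b - n) n m := by
  induction m with
  | zero => exact ⟨0, by simpa [returnAt, occCount] using hb⟩
  | succ m ih =>
    classical
    obtain ⟨n, hn⟩ := ih
    have hex : ∃ d : ℕ, 0 < d ∧ ω ∈ occ (b - n - d) := by
      obtain ⟨t, ht, ht_mem⟩ := frequently_atTop.1 hinf (n + 1)
      exact ⟨t - n, by omega, by rwa [Nat.cast_sub (by omega), sub_sub, add_sub_cancel]⟩
    obtain ⟨hd, hdocc⟩ := Nat.find_spec hex
    have hprev : ω ∈ returnAt occ (b - ↑(Nat.find hex + n)) (Nat.find hex) 1 := by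
      have hstart : ω ∈ occ (b - ↑(Nat.find hex + n)) := by
        rwa [Nat.cast_add, add_comm, ← sub_sub]
      refine ⟨⟨hstart, by convert hn.1.1 using 2; push_cast; ring⟩,
        (occCount_eq_one_iff hstart hd).2 fun u hu hud hu_mem => ?_⟩
      refine Nat.find_min hex (m := Nat.find hex - u) (by omega) ⟨by omega, ?_⟩
      convert hu_mem using 2
      push_cast [Nat.cast_sub hud.le]
      ring
    refine ⟨Nat.find hex + n, ?_⟩
    rw [add_comm m]
    refine (mem_returnAt_add_iff hprev).2 ?_
    convert hn using 2
    push_cast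
    ring

section Shift

variable {σ : Ω → Ω} (hshift : ∀ ω k, σ ω ∈ occ k ↔ ω ∈ occ (k - 1))
include hshift

lemma iterate_mem_occ_iff (s : ℕ) (k : ℤ) : σ^[s] ω ∈ occ k ↔ ω ∈ occ (k - s) := by
  induction s generalizing ω with
  | zero => simp
  | succ s ih => rw [Function.iterate_succ_apply, ih, hshift]; push_cast; ring_nf

lemma occCount_iterate (s : ℕ) : occCount occ (σ^[s] ω) a n = occCount occ ω (a - s) n := by
  classical
  refine sum_congr rfl fun u _ => ?_
  simp only [Set.indicator_apply, Pi.one_apply, iterate_mem_occ_iff hshift, sub_add_eq_add_sub]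

lemma preimage_iterate_returnAt (s : ℕ) (a : ℤ) (n m : ℕ) :
    σ^[s] ⁻¹' returnAt occ a n m = returnAt occ (a - s) n m := by
  ext ω
  simp only [returnAt, Set.mem_preimage, Set.mem_inter_iff, Set.mem_ofPred_eq,
    iterate_mem_occ_iff hshift, occCount_iterate hshift, sub_add_eq_add_sub]

end Shift

section Measure

variable [MeasurableSpace Ω] {μ : Measure Ω} {σ : Ω → Ω}

lemma measurable_sInf_nat {S : Ω → Set ℕ} (hS : ∀ n, Measurable fun ω => n ∈ S ω) :
    Measurable fun ω => sInf (S ω) := by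
  refine measurable_to_countable' fun k => ?_
  have hpre : (fun ω => sInf (S ω)) ⁻¹' {k} =
      {ω | (∀ n, n ∉ S ω) ∧ k = 0 ∨ k ∈ S ω ∧ ∀ n ∈ S ω, k ≤ n} := by
    ext ω
    rcases (S ω).eq_empty_or_nonempty with h | h
    · simp [h, eq_comm]
    · have hne : ¬ ∀ n, n ∉ S ω := fun hn => h.ne_empty (Set.eq_empty_iff_forall_notMem.2 hn)
      have hleast : sInf (S ω) = k ↔ IsLeast (S ω) k :=
        ⟨fun hk => hk ▸ isLeast_csInf h, IsLeast.csInf_eq⟩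
      simp [hleast, IsLeast, lowerBounds, hne]
  rw [hpre]
  exact measurableSet_setOfPred.2 (by fun_prop)

lemma lintegral_natCast_eq_tsum {ν : Measure Ω} {f : Ω → ℕ} (hf : Measurable f) :
    ∫⁻ ω, (f ω : ℝ≥0∞) ∂ν = ∑' n : ℕ, n * ν {ω | f ω = n} := by
  rw [← lintegral_map measurable_from_top hf, lintegral_countable']
  simp only [Measure.map_apply hf (measurableSet_singleton _)]
  rfl

variable (hocc : ∀ k, MeasurableSet (occ k))
include hocc

lemma measurable_occCount (a : ℤ) (n : ℕ) : Measurable fun ω => occCount occ ω a n :=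
  Finset.measurable_sum _ fun _ _ => measurable_const.indicator (hocc _)

lemma measurableSet_returnAt (a : ℤ) (n m : ℕ) : MeasurableSet (returnAt occ a n m) :=
  ((hocc a).inter (hocc _)).inter (measurable_occCount hocc a n (measurableSet_singleton m))

lemma measurable_recTime : ∀ j, Measurable (recTime occ j)
  | 0 => measurable_const
  | j + 1 => measurable_sInf_nat fun t =>
      measurableSet_setOfPred.1 ((measurable_recTime j measurableSet_Iio).inter (hocc t))

variable [IsFiniteMeasure μ] (hσ : MeasurePreserving σ μ μ)
  (hshift : ∀ ω k, σ ω ∈ occ k ↔ ω ∈ occ (k - 1))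
include hσ hshift

lemma ae_frequently_mem_occ_neg : ∀ᵐ ω ∂μ, ω ∈ occ 0 → ∃ᶠ t : ℕ in atTop, ω ∈ occ (-t) := by
  filter_upwards [hσ.conservative.ae_mem_imp_frequently_image_mem (hocc 0).nullMeasurableSet]
    with ω hrec h0
  simpa [iterate_mem_occ_iff hshift] using hrec h0

/- `σ` need not be invertible, so this is not Poincaré recurrence for an inverse map: a point
of `occ 0` that never sees the block at lags `≥ N` cannot come back to that set after `m > N`
steps, since it would then see the block at lag `m`. -/
lemma ae_frequently_mem_occ : ∀ᵐ ω ∂μ, ω ∈ occ 0 → ∃ᶠ t : ℕ in atTop, ω ∈ occ t := by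
  have hnull : ∀ N : ℕ, μ (occ 0 ∩ {ω | ∀ t ≥ N, ω ∉ occ t}) = 0 := by
    intro N
    by_contra hpos
    have hmeas : MeasurableSet (occ 0 ∩ {ω | ∀ t ≥ N, ω ∉ occ (t : ℤ)}) :=
      (hocc 0).inter (measurableSet_setOfPred.2 (by fun_prop (disch := exact hocc _)))
    obtain ⟨m, hmN, hm⟩ :=
      hσ.conservative.exists_gt_measure_inter_ne_zero hmeas.nullMeasurableSet hpos N
    obtain ⟨ω, ⟨h0, -⟩, -, hlast⟩ := nonempty_of_measure_ne_zero hm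
    exact hlast m hmN.le (by simpa [iterate_mem_occ_iff hshift] using h0)
  rw [ae_iff]
  refine measure_mono_null (fun ω hω => ?_) (measure_iUnion_null hnull)
  simp only [Set.mem_ofPred_eq, Classical.not_imp, not_frequently, eventually_atTop] at hω
  obtain ⟨h0, N, hN⟩ := hω
  exact Set.mem_iUnion.2 ⟨N, h0, hN⟩

lemma recTime_eq_inter_ae_eq (j n : ℕ) :
    ({ω | recTime occ j ω = n} ∩ occ 0 : Set Ω) =ᵐ[μ] returnAt occ 0 n j := by
  refine eventuallyEq_set.2 ?_
  filter_upwards [ae_frequently_mem_occ hocc hσ hshift] with ω hrec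
  by_cases h0 : ω ∈ occ 0
  · simpa [h0] using recTime_eq_iff h0 (hrec h0)
  · simpa [h0] using fun h => h0 h.1.1

lemma recTime_succ_sub_eq_inter_ae_eq (m t : ℕ) :
    ({ω | recTime occ (m + 1) ω - recTime occ m ω = t} ∩ occ 0 : Set Ω) =ᵐ[μ]
      (⋃ n : ℕ, returnAt occ 0 n m ∩ returnAt occ n t 1 : Set Ω) := by
  refine eventuallyEq_set.2 ?_
  filter_upwards [ae_frequently_mem_occ hocc hσ hshift] with ω hrec
  by_cases h0 : ω ∈ occ 0
  · simpa [h0] using recTime_succ_sub_eq_iff h0 (hrec h0)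
  · simpa [h0] using fun n h _ => h0 h.1.1

lemma iUnion_returnAt_sub_inter_ae_eq {s : Set Ω} (hs : s ⊆ occ 0) (m : ℕ) :
    (⋃ n : ℕ, returnAt occ (0 - n) n m ∩ s : Set Ω) =ᵐ[μ] s := by
  refine eventuallyEq_set.2 ?_
  filter_upwards [ae_frequently_mem_occ_neg hocc hσ hshift] with ω hrec
  simp only [Set.mem_iUnion, Set.mem_inter_iff, exists_and_right, and_iff_right_iff_imp]
  exact fun h => exists_mem_returnAt_sub (hs h) (by simpa using hrec (hs h)) m

theorem measure_recTime_succ_sub_eq_inter (m t : ℕ) :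
    μ ({ω | recTime occ (m + 1) ω - recTime occ m ω = t} ∩ occ 0) =
      μ ({ω | recTime occ 1 ω = t} ∩ occ 0) := by
  have hmeas := measurableSet_returnAt hocc
  calc _ = μ (⋃ n : ℕ, returnAt occ 0 n m ∩ returnAt occ n t 1) :=
        measure_congr (recTime_succ_sub_eq_inter_ae_eq hocc hσ hshift m t)
    _ = ∑' n : ℕ, μ (returnAt occ 0 n m ∩ returnAt occ n t 1) :=
        measure_iUnion (fun _ _ h => (pairwise_disjoint_returnAt 0 m h).mono
          Set.inter_subset_left Set.inter_subset_left) fun _ => (hmeas _ _ _).inter (hmeas _ _ _)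
    _ = ∑' n : ℕ, μ (returnAt occ (0 - n) n m ∩ returnAt occ 0 t 1) := tsum_congr fun n => by
        rw [← (hσ.iterate n).measure_preimage ((hmeas _ _ _).inter (hmeas _ _ _)).nullMeasurableSet,
          Set.preimage_inter, preimage_iterate_returnAt hshift, preimage_iterate_returnAt hshift,
          sub_self]
    _ = μ (⋃ n : ℕ, returnAt occ (0 - n) n m ∩ returnAt occ 0 t 1) :=
        (measure_iUnion (fun _ _ h => (pairwise_disjoint_returnAt_sub 0 m h).mono
          Set.inter_subset_left Set.inter_subset_left)
          fun _ => (hmeas _ _ _).inter (hmeas _ _ _)).symm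
    _ = μ (returnAt occ 0 t 1) :=
        measure_congr (iUnion_returnAt_sub_inter_ae_eq hocc hσ hshift (fun _ h => h.1.1) m)
    _ = _ := (measure_congr (recTime_eq_inter_ae_eq hocc hσ hshift 1 t)).symm

theorem lintegral_recTime (j : ℕ) :
    ∫⁻ ω in occ 0, (recTime occ j ω : ℝ≥0∞) ∂μ =
      j * ∫⁻ ω in occ 0, (recTime occ 1 ω : ℝ≥0∞) ∂μ := by
  have hT := measurable_recTime hocc
  have hgap (i : ℕ) : ∫⁻ ω in occ 0, ((recTime occ (i + 1) ω - recTime occ i ω : ℕ) : ℝ≥0∞) ∂μ =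
      ∫⁻ ω in occ 0, (recTime occ 1 ω : ℝ≥0∞) ∂μ := by
    rw [lintegral_natCast_eq_tsum (f := fun ω => recTime occ (i + 1) ω - recTime occ i ω)
      ((hT _).sub (hT _)), lintegral_natCast_eq_tsum (hT 1)]
    simp only [Measure.restrict_apply' (hocc 0), measure_recTime_succ_sub_eq_inter hocc hσ hshift]
  have htel : ∀ᵐ ω ∂μ.restrict (occ 0), (recTime occ j ω : ℝ≥0∞) =
      ∑ i ∈ range j, ((recTime occ (i + 1) ω - recTime occ i ω : ℕ) : ℝ≥0∞) := by
    filter_upwards [ae_restrict_mem (hocc 0),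
      ae_restrict_of_ae (ae_frequently_mem_occ hocc hσ hshift)] with ω h0 hrec
    have hmono : Monotone fun i => recTime occ i ω :=
      monotone_nat_of_le_succ fun i => (recTime_succ_mem (hrec h0) i).1.le
    rw [← Nat.cast_sum, sum_range_tsub hmono]
    simp [recTime]
  rw [lintegral_congr_ae htel,
    lintegral_finsetSum' _ fun i _ => (by fun_prop : Measurable _).aemeasurable,
    sum_congr rfl fun i _ => hgap i]
  simp

theorem integral_recTime (j : ℕ) :
    ∫ ω in occ 0, (recTime occ j ω : ℝ) ∂μ = j * ∫ ω in occ 0, (recTime occ 1 ω : ℝ) ∂μ := by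
  have hreal (i : ℕ) : ∫ ω in occ 0, (recTime occ i ω : ℝ) ∂μ =
      (∫⁻ ω in occ 0, (recTime occ i ω : ℝ≥0∞) ∂μ).toReal := by
    have hTi := measurable_recTime hocc i
    rw [← integral_toReal (by fun_prop : Measurable fun ω => (recTime occ i ω : ℝ≥0∞)).aemeasurable
      (ae_of_all _ fun _ => ENNReal.natCast_lt_top _)]
    simp
  rw [hreal, hreal, lintegral_recTime hocc hσ hshift, ENNReal.toReal_mul, ENNReal.toReal_natCast]

end Measure

end BlockRecurrence

theorem stmt_4_general {Ω B : Type*} [MeasurableSpace Ω]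
    (μ : Measure Ω) [IsProbabilityMeasure μ]
    [MeasurableSpace B] [MeasurableSingletonClass B]
    (Y : ℤ → Ω → B) (hmY : ∀ n, Measurable (Y n))
    (σ : Ω → Ω) (hσ : MeasurePreserving σ μ μ)
    (hY : ∀ n ω, Y n (σ ω) = Y (n + 1) ω)
    (L : ℕ) (y : Fin L → B)
    (Ey : Set Ω) (hEy : Ey = {ω | ∀ i : Fin L, Y (1 + (i : ℕ) : ℤ) ω = y i})
    (T : ℕ → Ω → ℕ)
    (hT0 : ∀ ω, T 0 ω = 0)
    (hTs : ∀ j ω, T (j + 1) ω = sInf {t : ℕ | T j ω < t ∧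
      ∀ i : Fin L, Y (1 + (i : ℕ) - (t : ℕ) : ℤ) ω = y i}) :
    (∀ n t : ℕ, 1 ≤ n → 1 ≤ t →
      μ ({ω | T n ω - T (n - 1) ω = t} ∩ Ey) = μ ({ω | T 1 ω = t} ∩ Ey)) ∧
    (∀ j : ℕ,
      (∫ ω in Ey, (T j ω : ℝ) ∂μ) / (μ Ey).toReal
        = (j : ℝ) * ((∫ ω in Ey, (T 1 ω : ℝ) ∂μ) / (μ Ey).toReal)) := by
  let occ : ℤ → Set Ω := fun k => {ω | ∀ i : Fin L, Y (1 + (i : ℕ) - k) ω = y i}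
  have hocc (k : ℤ) : MeasurableSet (occ k) := by
    simp only [occ, Set.ofPred_forall]
    exact .iInter fun i => hmY _ (measurableSet_singleton _)
  have hshift (ω : Ω) (k : ℤ) : σ ω ∈ occ k ↔ ω ∈ occ (k - 1) := by
    simp only [occ, Set.mem_ofPred_eq, hY]
    refine forall_congr' fun i => ?_
    rw [sub_add, sub_sub_eq_add_sub]
  have hT : T = BlockRecurrence.recTime occ := by
    funext j ω
    induction j with
    | zero => exact hT0 ω
    | succ j ih => rw [hTs, ih]; rfl
  obtain rfl : Ey = occ 0 := by simp [hEy, occ]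
  subst hT
  refine ⟨fun n t hn _ => ?_, fun j => ?_⟩
  · obtain ⟨m, rfl⟩ := Nat.exists_eq_add_of_le' hn
    exact BlockRecurrence.measure_recTime_succ_sub_eq_inter hocc hσ hshift m t
  · rw [BlockRecurrence.integral_recTime hocc hσ hshift, mul_div_assoc]

/-- For a stationary process `(Y_n)` and successive backward recurrence times
`T₀ = 0 < T₁ < T₂ < ⋯` of a block `y` with positive probability, the gaps between
successive recurrence times are, conditioned on `Y₁^L = y`, identically distributed:
`P[T_n - T_{n-1} = t, Y₁^L = y] = P[T₁ = t, Y₁^L = y]` for all `n, t ≥ 1`; consequently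
`E[T_j | Y₁^L = y] = j · E[T₁ | Y₁^L = y]`. -/
theorem stmt_4 {Ω B : Type*} [MeasurableSpace Ω]
    (μ : Measure Ω) [IsProbabilityMeasure μ]
    [Fintype B] [MeasurableSpace B] [MeasurableSingletonClass B]
    (Y : ℤ → Ω → B) (hmY : ∀ n, Measurable (Y n))
    (σ : Ω → Ω) (hσ : MeasurePreserving σ μ μ)
    (hY : ∀ n ω, Y n (σ ω) = Y (n + 1) ω)
    (L : ℕ) (hL : 1 ≤ L) (y : Fin L → B)
    (Ey : Set Ω) (hEy : Ey = {ω | ∀ i : Fin L, Y (1 + (i : ℕ) : ℤ) ω = y i})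
    (hpos : 0 < μ Ey)
    (T : ℕ → Ω → ℕ)
    (hT0 : ∀ ω, T 0 ω = 0)
    (hTs : ∀ j ω, T (j + 1) ω = sInf {t : ℕ | T j ω < t ∧
      ∀ i : Fin L, Y (1 + (i : ℕ) - (t : ℕ) : ℤ) ω = y i}) :
    (∀ n t : ℕ, 1 ≤ n → 1 ≤ t →
      μ ({ω | T n ω - T (n - 1) ω = t} ∩ Ey) = μ ({ω | T 1 ω = t} ∩ Ey)) ∧
    (∀ j : ℕ,
      (∫ ω in Ey, (T j ω : ℝ) ∂μ) / (μ Ey).toReal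
        = (j : ℝ) * ((∫ ω in Ey, (T 1 ω : ℝ) ∂μ) / (μ Ey).toReal)) :=
  stmt_4_general μ Y hmY σ hσ hY L y Ey hEy T hT0 hTs
end

section
/- Let (Y_n) be stationary, y ∈ ℬ^L with P[Y_1^L = y] > 0, and T_j the j-th backward recurrence time of the block y. Then E[T_j | Y_1^L = y] ≤ j / P[Y_1^L = y] for every j ≥ 1. -/
open MeasureTheory
open scoped ENNReal

/-- For a stationary process `(Y_n)`, a block `y` with `P[Y₁^L = y] > 0`, and the `j`-th
backward recurrence time `T_j` of the block `y`,
`E[T_j | Y₁^L = y] ≤ j / P[Y₁^L = y]` for every `j ≥ 1`. -/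
theorem stmt_5 {Ω B : Type*} [MeasurableSpace Ω]
    (μ : Measure Ω) [IsProbabilityMeasure μ]
    [Fintype B] [MeasurableSpace B] [MeasurableSingletonClass B]
    (Y : ℤ → Ω → B) (hmY : ∀ n, Measurable (Y n))
    (σ : Ω → Ω) (hσ : MeasurePreserving σ μ μ)
    (hY : ∀ n ω, Y n (σ ω) = Y (n + 1) ω)
    (L : ℕ) (hL : 1 ≤ L) (y : Fin L → B)
    (Ey : Set Ω) (hEy : Ey = {ω | ∀ i : Fin L, Y (1 + (i : ℕ) : ℤ) ω = y i})
    (hpos : 0 < μ Ey)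
    (T : ℕ → Ω → ℕ)
    (hT0 : ∀ ω, T 0 ω = 0)
    (hTs : ∀ j ω, T (j + 1) ω = sInf {t : ℕ | T j ω < t ∧
      ∀ i : Fin L, Y (1 + (i : ℕ) - (t : ℕ) : ℤ) ω = y i}) :
    ∀ j : ℕ, 1 ≤ j →
      (∫ ω in Ey, (T j ω : ℝ) ∂μ) / (μ Ey).toReal ≤ (j : ℝ) / (μ Ey).toReal := by
  intro j hj
  classical
  set Bs : ℤ → Set Ω := fun s => {ω | ∀ i : Fin L, Y (1 + (i:ℕ) - s) ω = y i} with hBsdef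
  have hBs : ∀ (s : ℤ) ω, ω ∈ Bs s ↔ ∀ i : Fin L, Y (1 + (i:ℕ) - s) ω = y i :=
    fun _ _ => Iff.rfl
  have hBsm : ∀ s, MeasurableSet (Bs s) := by
    intro s
    have h : Bs s = ⋂ i : Fin L, (Y (1 + (i:ℕ) - s)) ⁻¹' {y i} := by
      ext ω; simp [hBs, Set.mem_iInter]
    rw [h]
    exact MeasurableSet.iInter fun i => (hmY _) (measurableSet_singleton _)
  have hEyB : Ey = Bs 0 := by
    rw [hEy]; ext ω; simp [hBs]
  have hEymeas : MeasurableSet Ey := hEyB ▸ hBsm 0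
  have hshift : ∀ (s : ℤ) ω, σ ω ∈ Bs s ↔ ω ∈ Bs (s - 1) := by
    intro s ω
    simp only [hBs]
    refine forall_congr' fun i => ?_
    rw [hY]
    constructor
    · intro h; rw [← h]; congr 1; ring
    · intro h; rw [← h]; congr 1; ring
  have hiter : ∀ (t : ℕ) (s : ℤ) ω, σ^[t] ω ∈ Bs s ↔ ω ∈ Bs (s - t) := by
    intro t
    induction t with
    | zero => intro s ω; simp
    | succ n ih =>
      intro s ω
      rw [Function.iterate_succ_apply, ih, hshift]
      have h : (s - (n:ℤ) - 1) = s - ((n+1 : ℕ) : ℤ) := by push_cast; ring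
      rw [h]
  -- basic T facts
  have hTle : ∀ (k t : ℕ) ω, T k ω < t → ω ∈ Bs (t:ℤ) → T (k+1) ω ≤ t := by
    intro k t ω h1 h2
    rw [hTs]
    exact Nat.sInf_le ⟨h1, h2⟩
  have hTmem : ∀ (k : ℕ) ω, T (k+1) ω ≠ 0 →
      T k ω < T (k+1) ω ∧ ω ∈ Bs ((T (k+1) ω : ℕ) : ℤ) := by
    intro k ω h0
    have hne : {t : ℕ | T k ω < t ∧
        ∀ i : Fin L, Y (1 + (i:ℕ) - (t:ℕ) : ℤ) ω = y i}.Nonempty := by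
      by_contra hc
      rw [Set.not_nonempty_iff_eq_empty] at hc
      rw [hTs, hc] at h0
      simp [Nat.sInf_empty] at h0
    have h := Nat.sInf_mem hne
    rw [← hTs] at h
    exact h
  have hcount : ∀ (k t : ℕ) ω, t < T k ω →
      ((Finset.Icc 1 t).filter (fun s : ℕ => ω ∈ Bs (s:ℤ))).card < k := by
    intro k
    induction k with
    | zero => intro t ω h; rw [hT0] at h; omega
    | succ k ih =>
      intro t ω h
      have h0 : T (k+1) ω ≠ 0 := by omega
      obtain ⟨hlt, hmem⟩ := hTmem k ω h0
      by_cases hcase : t < T k ω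
      · exact lt_trans (ih t ω hcase) (Nat.lt_succ_self k)
      push_neg at hcase
      have hno : ∀ s : ℕ, T k ω < s → s ≤ t → ω ∉ Bs (s:ℤ) := by
        intro s h1 h2 hB
        have := hTle k s ω h1 hB
        omega
      by_cases hz : T k ω = 0
      · have he : ((Finset.Icc 1 t).filter (fun s : ℕ => ω ∈ Bs (s:ℤ))) = ∅ := by
          rw [Finset.filter_eq_empty_iff]
          intro s hs
          rw [Finset.mem_Icc] at hs
          exact hno s (by omega) hs.2
        rw [he]; simp
      · have hsub : ((Finset.Icc 1 t).filter (fun s : ℕ => ω ∈ Bs (s:ℤ)))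
            ⊆ insert (T k ω) ((Finset.Icc 1 (T k ω - 1)).filter (fun s : ℕ => ω ∈ Bs (s:ℤ))) := by
          intro s hs
          rw [Finset.mem_filter, Finset.mem_Icc] at hs
          obtain ⟨⟨h1, h2⟩, hb⟩ := hs
          rcases lt_trichotomy s (T k ω) with h' | h' | h'
          · refine Finset.mem_insert_of_mem ?_
            rw [Finset.mem_filter, Finset.mem_Icc]
            exact ⟨⟨h1, by omega⟩, hb⟩
          · rw [h']; exact Finset.mem_insert_self _ _
          · exact absurd hb (hno s h' h2)
        have hcard := Finset.card_le_card hsub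
        have hcard2 := Finset.card_insert_le (T k ω)
          ((Finset.Icc 1 (T k ω - 1)).filter (fun s : ℕ => ω ∈ Bs (s:ℤ)))
        have hih := ih (T k ω - 1) ω (by omega)
        omega
  -- measurability of T
  have hTm : ∀ k, Measurable (T k) := by
    intro k
    induction k with
    | zero =>
      have h : T 0 = fun _ => 0 := funext hT0
      rw [h]; exact measurable_const
    | succ k ih =>
      have hS : ∀ t : ℕ, MeasurableSet {ω | T k ω < t ∧ ω ∈ Bs (t:ℤ)} := by
        intro t
        have h : {ω | T k ω < t ∧ ω ∈ Bs (t:ℤ)} = (T k ⁻¹' Set.Iio t) ∩ Bs (t:ℤ) := rfl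
        rw [h]
        exact (ih measurableSet_Iio).inter (hBsm _)
      have hTS : ∀ ω, T (k+1) ω = sInf {t : ℕ | T k ω < t ∧ ω ∈ Bs (t:ℤ)} :=
        fun ω => hTs k ω
      apply measurable_to_countable'
      intro n
      match n with
      | 0 =>
        have h : T (k+1) ⁻¹' {0} = ⋂ t : ℕ, {ω | T k ω < t ∧ ω ∈ Bs (t:ℤ)}ᶜ := by
          ext ω
          simp only [Set.mem_preimage, Set.mem_singleton_iff, Set.mem_iInter,
            Set.mem_compl_iff, Set.mem_setOf_eq]
          rw [hTS ω]
          constructor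
          · intro h t ht
            rcases Nat.sInf_eq_zero.mp h with h0 | hemp
            · exact absurd h0.1 (by omega)
            · have : t ∈ ({t : ℕ | T k ω < t ∧ ω ∈ Bs (t:ℤ)} : Set ℕ) := ht
              rw [hemp] at this
              exact this
          · intro h
            have hemp : {t : ℕ | T k ω < t ∧ ω ∈ Bs (t:ℤ)} = ∅ := by
              ext t; simp only [Set.mem_setOf_eq, Set.mem_empty_iff_false, iff_false]
              exact h t
            rw [hemp, Nat.sInf_empty]
        rw [h]
        exact MeasurableSet.iInter fun t => (hS t).compl
      | (n+1) =>
        have h : T (k+1) ⁻¹' {n+1}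
            = {ω | T k ω < (n+1) ∧ ω ∈ Bs ((n+1:ℕ):ℤ)} ∩
              ⋂ m : Fin (n+1), {ω | T k ω < (m:ℕ) ∧ ω ∈ Bs ((m:ℕ):ℤ)}ᶜ := by
          ext ω
          simp only [Set.mem_preimage, Set.mem_singleton_iff, Set.mem_inter_iff,
            Set.mem_iInter, Set.mem_compl_iff, Set.mem_setOf_eq]
          rw [hTS ω]
          constructor
          · intro h
            have hne : ({t : ℕ | T k ω < t ∧ ω ∈ Bs (t:ℤ)} : Set ℕ).Nonempty := by
              by_contra hc
              rw [Set.not_nonempty_iff_eq_empty] at hc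
              rw [hc, Nat.sInf_empty] at h
              omega
            have hmem := Nat.sInf_mem hne
            rw [h] at hmem
            refine ⟨hmem, ?_⟩
            intro m
            have hm : (m:ℕ) < sInf {t : ℕ | T k ω < t ∧ ω ∈ Bs (t:ℤ)} := by
              rw [h]; exact m.isLt
            exact Nat.notMem_of_lt_sInf hm
          · rintro ⟨hmem, hforall⟩
            have h1 : sInf {t : ℕ | T k ω < t ∧ ω ∈ Bs (t:ℤ)} ≤ n+1 := Nat.sInf_le hmem
            have hne : ({t : ℕ | T k ω < t ∧ ω ∈ Bs (t:ℤ)} : Set ℕ).Nonempty := ⟨n+1, hmem⟩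
            have h2 := Nat.sInf_mem hne
            by_contra hc
            have hlt : sInf {t : ℕ | T k ω < t ∧ ω ∈ Bs (t:ℤ)} < n+1 := by omega
            exact hforall ⟨_, hlt⟩ h2
        rw [h]
        exact (hS _).inter (MeasurableSet.iInter fun m => (hS _).compl)
  -- the sets P and Q
  set P : ℕ → Set Ω := fun t => Bs 0 ∩
    {ω | ((Finset.Icc 1 t).filter (fun s : ℕ => ω ∈ Bs (s:ℤ))).card < j} with hPdef
  have hNm : ∀ t : ℕ,
      Measurable (fun ω => ((Finset.Icc 1 t).filter (fun s : ℕ => ω ∈ Bs (s:ℤ))).card) := by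
    intro t
    have h : (fun ω => ((Finset.Icc 1 t).filter (fun s : ℕ => ω ∈ Bs (s:ℤ))).card)
        = fun ω => ∑ s ∈ Finset.Icc 1 t, if ω ∈ Bs (s:ℤ) then 1 else 0 := by
      funext ω
      rw [Finset.card_filter]
    rw [h]
    exact Finset.measurable_sum _ fun s _ =>
      Measurable.ite (hBsm _) measurable_const measurable_const
  have hPm : ∀ t, MeasurableSet (P t) := by
    intro t
    exact (hBsm 0).inter ((hNm t) measurableSet_Iio)
  set Q : ℕ → Set Ω := fun t => σ^[t] ⁻¹' (P t) with hQdef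
  have hQm : ∀ t, MeasurableSet (Q t) := fun t => (hσ.measurable.iterate t) (hPm t)
  have hμQ : ∀ t, μ (Q t) = μ (P t) :=
    fun t => (hσ.iterate t).measure_preimage (hPm t).nullMeasurableSet
  have hQmem : ∀ (t : ℕ) ω, ω ∈ Q t ↔ (ω ∈ Bs (-(t:ℤ)) ∧
      ((Finset.Icc 1 t).filter (fun s : ℕ => ω ∈ Bs ((s:ℤ) - t))).card < j) := by
    intro t ω
    have h1 : σ^[t] ω ∈ Bs 0 ↔ ω ∈ Bs (-(t:ℤ)) := by rw [hiter]; norm_num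
    have h2 : (Finset.Icc 1 t).filter (fun s : ℕ => σ^[t] ω ∈ Bs ((s:ℕ):ℤ))
        = (Finset.Icc 1 t).filter (fun s : ℕ => ω ∈ Bs ((s:ℤ) - t)) := by
      apply Finset.filter_congr
      intro s _
      simp [hiter]
    constructor
    · rintro ⟨hb, hc⟩
      exact ⟨h1.mp hb, by rw [← h2]; exact hc⟩
    · rintro ⟨hb, hc⟩
      exact ⟨h1.mpr hb, by rw [Set.mem_setOf_eq, h2]; exact hc⟩
  have hsub : ∀ t, Ey ∩ {ω | t < T j ω} ⊆ P t := by
    intro t ω hω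
    obtain ⟨h1, h2⟩ := hω
    exact ⟨hEyB ▸ h1, hcount j t ω h2⟩
  -- each ω is in at most j of the Q t
  have hQcard : ∀ (n : ℕ) ω, ((Finset.range n).filter (fun t => ω ∈ Q t)).card ≤ j := by
    intro n ω
    by_contra hc
    push_neg at hc
    set G := (Finset.range n).filter (fun t => ω ∈ Q t) with hG
    have hGne : G.Nonempty := Finset.card_pos.mp (by omega)
    set m := G.max' hGne with hm
    have hmG : m ∈ G := G.max'_mem hGne
    have hmQ : ω ∈ Q m := (Finset.mem_filter.mp hmG).2
    rw [hQmem] at hmQ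
    obtain ⟨-, hHcard⟩ := hmQ
    set H := (Finset.Icc 1 m).filter (fun s : ℕ => ω ∈ Bs ((s:ℤ) - m)) with hH
    have hmap : ∀ t ∈ G.erase m, m - t ∈ H := by
      intro t ht
      have htm : t ≠ m := (Finset.mem_erase.mp ht).1
      have htG : t ∈ G := (Finset.mem_erase.mp ht).2
      have htle : t ≤ m := G.le_max' t htG
      have htlt : t < m := lt_of_le_of_ne htle htm
      have htQ : ω ∈ Q t := (Finset.mem_filter.mp htG).2
      rw [hQmem] at htQ
      have hB : ω ∈ Bs (-(t:ℤ)) := htQ.1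
      rw [hH, Finset.mem_filter, Finset.mem_Icc]
      refine ⟨⟨by omega, by omega⟩, ?_⟩
      have hcast : ((m - t : ℕ) : ℤ) - m = -(t:ℤ) := by omega
      rw [hcast]; exact hB
    have hinj : Set.InjOn (fun t => m - t) (G.erase m) := by
      intro a ha b hb hab
      have ha' : a ≤ m := G.le_max' a (Finset.mem_erase.mp ha).2
      have hb' : b ≤ m := G.le_max' b (Finset.mem_erase.mp hb).2
      have ha'' : a ≠ m := (Finset.mem_erase.mp ha).1
      have hb'' : b ≠ m := (Finset.mem_erase.mp hb).1
      simp only at hab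
      omega
    have hle := Finset.card_le_card_of_injOn _ hmap hinj
    have hce := Finset.card_erase_of_mem hmG
    omega
  -- sum of measures of Q over any range is ≤ j
  have hsum : ∀ n : ℕ, ∑ t ∈ Finset.range n, μ (Q t) ≤ (j : ℝ≥0∞) := by
    intro n
    have hcal : ∑ t ∈ Finset.range n, μ (Q t)
        = ∫⁻ ω, ∑ t ∈ Finset.range n, (Q t).indicator (fun _ => (1:ℝ≥0∞)) ω ∂μ := by
      rw [lintegral_finset_sum _ (fun t _ => Measurable.indicator measurable_const (hQm t))]
      exact Finset.sum_congr rfl fun t _ => (lintegral_indicator_one (hQm t)).symm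
    rw [hcal]
    have hb : ∫⁻ ω, ∑ t ∈ Finset.range n, (Q t).indicator (fun _ => (1:ℝ≥0∞)) ω ∂μ
        ≤ ∫⁻ _ω, (j:ℝ≥0∞) ∂μ := by
      apply lintegral_mono
      intro ω
      show ∑ t ∈ Finset.range n, (Q t).indicator (fun _ => (1:ℝ≥0∞)) ω ≤ (j:ℝ≥0∞)
      have he : ∑ t ∈ Finset.range n, (Q t).indicator (fun _ => (1:ℝ≥0∞)) ω
          = (((Finset.range n).filter (fun t => ω ∈ Q t)).card : ℝ≥0∞) := by
        rw [Finset.card_filter]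
        push_cast
        exact Finset.sum_congr rfl fun t _ => by simp [Set.indicator_apply]
      rw [he]
      exact_mod_cast Nat.cast_le.mpr (hQcard n ω)
    refine le_trans hb ?_
    simp [lintegral_const]
  -- layer cake
  have hlayer : ∫⁻ ω in Ey, (T j ω : ℝ≥0∞) ∂μ
      = ∑' t : ℕ, μ ({ω | t < T j ω} ∩ Ey) := by
    have hpt : ∀ ω, (T j ω : ℝ≥0∞)
        = ∑' t : ℕ, {ω' | t < T j ω'}.indicator (fun _ => (1:ℝ≥0∞)) ω := by
      intro ω
      have hind : ∀ t : ℕ, {ω' | t < T j ω'}.indicator (fun _ => (1:ℝ≥0∞)) ω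
          = if t < T j ω then 1 else 0 := fun t => by simp [Set.indicator_apply]
      simp_rw [hind]
      rw [tsum_eq_sum (s := Finset.range (T j ω)) ?_]
      · rw [Finset.sum_congr rfl (fun t ht => if_pos (Finset.mem_range.mp ht))]
        simp
      · intro t ht
        rw [Finset.mem_range] at ht
        exact if_neg ht
    have hmeas : ∀ t : ℕ, MeasurableSet {ω | t < T j ω} :=
      fun t => (hTm j) measurableSet_Ioi
    calc ∫⁻ ω in Ey, (T j ω : ℝ≥0∞) ∂μ
        = ∫⁻ ω in Ey, ∑' t : ℕ, {ω' | t < T j ω'}.indicator (fun _ => (1:ℝ≥0∞)) ω ∂μ :=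
          lintegral_congr hpt
      _ = ∑' t : ℕ, ∫⁻ ω in Ey, {ω' | t < T j ω'}.indicator (fun _ => (1:ℝ≥0∞)) ω ∂μ :=
          lintegral_tsum fun t =>
            (Measurable.indicator measurable_const (hmeas t)).aemeasurable
      _ = ∑' t : ℕ, μ ({ω | t < T j ω} ∩ Ey) := by
          refine tsum_congr fun t => ?_
          have hi : ∫⁻ ω in Ey, {ω' | t < T j ω'}.indicator (fun _ => (1:ℝ≥0∞)) ω ∂μ
              = (μ.restrict Ey) {ω | t < T j ω} := lintegral_indicator_one (hmeas t)
          rw [hi]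
          exact Measure.restrict_apply (hmeas t)
  -- main bound
  have hmain : ∫⁻ ω in Ey, (T j ω : ℝ≥0∞) ∂μ ≤ (j : ℝ≥0∞) := by
    rw [hlayer]
    have hterm : ∀ t : ℕ, μ ({ω | t < T j ω} ∩ Ey) ≤ μ (Q t) := by
      intro t
      rw [hμQ t]
      apply measure_mono
      intro ω hω
      exact hsub t ⟨hω.2, hω.1⟩
    refine le_trans (ENNReal.tsum_le_tsum hterm) ?_
    rw [ENNReal.tsum_eq_iSup_sum]
    apply iSup_le
    intro s
    calc ∑ t ∈ s, μ (Q t) ≤ ∑ t ∈ Finset.range (s.sup id + 1), μ (Q t) := by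
          apply Finset.sum_le_sum_of_subset
          intro t ht
          rw [Finset.mem_range]
          exact Nat.lt_succ_of_le (Finset.le_sup (f := id) ht)
      _ ≤ (j : ℝ≥0∞) := hsum _
  -- convert to Bochner integral
  have hfin : (∫ ω in Ey, (T j ω : ℝ) ∂μ) ≤ (j : ℝ) := by
    rw [integral_eq_lintegral_of_nonneg_ae
      (Filter.Eventually.of_forall fun ω => Nat.cast_nonneg _)
      ((measurable_from_top.comp (hTm j)).aestronglyMeasurable)]
    have hof : ∀ ω, ENNReal.ofReal ((T j ω : ℝ)) = ((T j ω : ℕ) : ℝ≥0∞) :=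
      fun ω => ENNReal.ofReal_natCast _
    simp_rw [hof]
    calc (∫⁻ ω in Ey, ((T j ω : ℕ) : ℝ≥0∞) ∂μ).toReal ≤ ((j:ℝ≥0∞)).toReal :=
          ENNReal.toReal_mono (by simp) hmain
      _ = (j : ℝ) := by simp
  have hc : 0 < (μ Ey).toReal := ENNReal.toReal_pos hpos.ne' (measure_ne_top μ Ey)
  gcongr
end

section
/- (Per-phrase codelength bound) Under joint stationarity, the expected codelength of the i-th phrase in Algorithm 1 satisfies E[ℓ(w_1^i) | X_{(i−1)L+1}^{iL} = x, Y_{(i−1)L+1}^{iL} = y] ≤ ı(x|y) + ⌈log₂(1+k)⌉ + k/(((i−1)L+1)·P[X_1^L = x, Y_1^L = y]), where ı(x|y) = −log₂ P[X_1^L = x | Y_1^L = y] is the conditional information. -/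
/-!
On the event that the `i`-th phrase is `(x, y)`, the codelength is at most
`⌈log₂(1+k)⌉ + log₂ max(n, 1) + k · [no joint match among the (i-1)L preceding positions]`.
For each `t`, the event "no joint match within `t - 1` steps back, but a `y`-match `t` steps
back" becomes, once shifted forward by `t` steps, a subset of `{Y-block = y}`, and the shifted
events are pairwise disjoint. By stationarity, the expected number of `y`-matches up to the first
joint match is therefore at most `P[y]` (conditional Kac lemma); without the `y`-condition the same
argument bounds the probability of no joint match within `K` steps by `1/(K+1)` (Kac lemma).
Jensen's inequality for `log₂` turns the first bound into `P[x,y] · log₂(P[y]/P[x,y])`, and the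
second bounds the escape term by `k/((i-1)L+1)`.
-/

open MeasureTheory
open scoped Classical

section Shift

variable {Ω : Type*} {B : ℤ → Set Ω} {σ : Ω → Ω}

lemma preimage_iterate_of_preimage_eq (hB : ∀ r, σ ⁻¹' B r = B (r + 1)) (d : ℕ) (r : ℤ) :
    σ^[d] ⁻¹' B r = B (r + d) := by
  induction d generalizing r with
  | zero => simp
  | succ d ih => rw [Function.iterate_succ, Set.preimage_comp, ih, hB]; push_cast; ring_nf

lemma measureReal_add_of_preimage_eq [MeasurableSpace Ω] {μ : Measure Ω}
    (hσ : MeasurePreserving σ μ μ) (hB : ∀ r, σ ⁻¹' B r = B (r + 1))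
    (hBm : ∀ r, MeasurableSet (B r)) (r : ℤ) (d : ℕ) : μ.real (B (r + d)) = μ.real (B r) := by
  rw [← preimage_iterate_of_preimage_eq hB, measureReal_def, measureReal_def,
    (hσ.iterate d).measure_preimage (hBm r).nullMeasurableSet]

end Shift

open Finset in
def noReturnBefore {Ω : Type*} (B : ℤ → Set Ω) (r : ℤ) (t : ℕ) : Set Ω :=
  B r \ ⋃ s ∈ Ico 1 t, B (r - s)

namespace noReturnBefore

variable {Ω : Type*} {B : ℤ → Set Ω} {σ : Ω → Ω}

lemma antitone (r : ℤ) : Antitone (noReturnBefore B r) := fun _ _ hst =>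
  Set.sdiff_subset_sdiff_right <| Set.biUnion_subset_biUnion_left <| by
    simpa using Set.Ico_subset_Ico_right hst

lemma subset (r : ℤ) (t : ℕ) : noReturnBefore B r t ⊆ B r := Set.sdiff_subset

lemma mem_iff {ω : Ω} {r : ℤ} {t : ℕ} :
    ω ∈ noReturnBefore B r t ↔ ω ∈ B r ∧ ∀ s ∈ Finset.Ico 1 t, ω ∉ B (r - s) := by
  simp [noReturnBefore]

lemma preimage_iterate (hB : ∀ r, σ ⁻¹' B r = B (r + 1)) (d : ℕ) (r : ℤ) (t : ℕ) :
    σ^[d] ⁻¹' noReturnBefore B r t = noReturnBefore B (r + d) t := by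
  simp only [noReturnBefore, Set.preimage_sdiff, Set.preimage_iUnion,
    preimage_iterate_of_preimage_eq hB, sub_add_eq_add_sub]

lemma measurableSet [MeasurableSpace Ω] (hBm : ∀ r, MeasurableSet (B r)) (r : ℤ) (t : ℕ) :
    MeasurableSet (noReturnBefore B r t) :=
  (hBm r).diff <| .biUnion (Finset.Ico 1 t).countable_toSet fun _ _ => hBm _

end noReturnBefore

section Kac

variable {Ω : Type*} [MeasurableSpace Ω] {μ : Measure Ω} {σ : Ω → Ω} {B C : ℤ → Set Ω}

open Finset

/-- Shifted forward by `t` steps, the `t`-th set becomes a subset of `C r`, and these shifted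
sets are pairwise disjoint: for `a < b` the `b`-th one excludes `B (r + a)`, which the `a`-th one
requires. -/
theorem sum_measureReal_noReturnBefore_inter_le [IsFiniteMeasure μ]
    (hσ : MeasurePreserving σ μ μ)
    (hB : ∀ r, σ ⁻¹' B r = B (r + 1)) (hC : ∀ r, σ ⁻¹' C r = C (r + 1))
    (hBm : ∀ r, MeasurableSet (B r)) (hCm : ∀ r, MeasurableSet (C r)) (r : ℤ) (K : ℕ) :
    ∑ t ∈ Icc 1 K, μ.real (noReturnBefore B r t ∩ C (r - t)) ≤ μ.real (C r) := by
  set D : ℕ → Set Ω := fun t => noReturnBefore B (r + t) t ∩ C r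
  have hmeasure (t : ℕ) : μ.real (noReturnBefore B r t ∩ C (r - t)) = μ.real (D t) := by
    have hpre : σ^[t] ⁻¹' (noReturnBefore B r t ∩ C (r - t)) = D t := by
      rw [Set.preimage_inter, noReturnBefore.preimage_iterate hB,
        preimage_iterate_of_preimage_eq hC, sub_add_cancel]
    rw [← hpre, measureReal_def, measureReal_def, (hσ.iterate t).measure_preimage
      ((noReturnBefore.measurableSet hBm r t).inter (hCm _)).nullMeasurableSet]
  have hdisj_lt (a b : ℕ) (ha : 1 ≤ a) (hab : a < b) : Disjoint (D a) (D b) := by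
    refine Set.disjoint_left.2 fun ω hωa hωb => ?_
    have hb := (noReturnBefore.mem_iff.1 hωb.1).2 (b - a) (by simp; omega)
    rw [show r + b - ((b - a : ℕ) : ℤ) = r + a by omega] at hb
    exact hb (noReturnBefore.mem_iff.1 hωa.1).1
  have hdisj : (↑(Icc 1 K) : Set ℕ).PairwiseDisjoint D := by
    intro a ha b hb hne
    rcases hne.lt_or_gt with h | h
    · exact hdisj_lt a b (mem_Icc.1 ha).1 h
    · exact (hdisj_lt b a (mem_Icc.1 hb).1 h).symm
  calc ∑ t ∈ Icc 1 K, μ.real (noReturnBefore B r t ∩ C (r - t))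
      = μ.real (⋃ t ∈ Icc 1 K, D t) := by
        rw [measureReal_biUnion_finset hdisj fun t _ =>
          (noReturnBefore.measurableSet hBm _ t).inter (hCm r)]
        exact sum_congr rfl fun t _ => hmeasure t
    _ ≤ μ.real (C r) := measureReal_mono (Set.iUnion₂_subset fun _ _ => Set.inter_subset_right)

theorem measureReal_noReturnBefore_succ_le [IsProbabilityMeasure μ]
    (hσ : MeasurePreserving σ μ μ) (hB : ∀ r, σ ⁻¹' B r = B (r + 1))
    (hBm : ∀ r, MeasurableSet (B r)) (r : ℤ) (K : ℕ) :
    μ.real (noReturnBefore B r (K + 1)) ≤ 1 / (K + 1) := by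
  have h := sum_measureReal_noReturnBefore_inter_le (C := fun _ => Set.univ) hσ hB
    (fun _ => rfl) hBm (fun _ => .univ) r (K + 1)
  simp only [Set.inter_univ, probReal_univ] at h
  rw [le_div_iff₀ (by positivity), mul_comm]
  calc ((K : ℝ) + 1) * μ.real (noReturnBefore B r (K + 1))
      = ∑ _t ∈ Icc 1 (K + 1), μ.real (noReturnBefore B r (K + 1)) := by simp
    _ ≤ ∑ t ∈ Icc 1 (K + 1), μ.real (noReturnBefore B r t) :=
        sum_le_sum fun t ht => measureReal_mono (noReturnBefore.antitone r (mem_Icc.1 ht).2)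
    _ ≤ 1 := h

end Kac

noncomputable def matchCount (J Y : ℕ → Prop) (M : ℕ) : ℕ :=
  if ∃ t : ℕ, 1 ≤ t ∧ t ≤ M ∧ J t
    then Nat.card {t : ℕ | 1 ≤ t ∧ t ≤ sInf {s : ℕ | 1 ≤ s ∧ s ≤ M ∧ J s} ∧ Y t}
    else 0

section MatchCount

variable {J Y : ℕ → Prop} {M : ℕ}

lemma matchCount_le (J Y : ℕ → Prop) (M : ℕ) : matchCount J Y M ≤ M := by
  unfold matchCount
  split_ifs with h
  · set T := sInf {s | 1 ≤ s ∧ s ≤ M ∧ J s}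
    calc _ ≤ Nat.card (Set.Icc 1 T) :=
          Nat.card_mono (Set.finite_Icc _ _) fun t ht => ⟨ht.1, ht.2.1⟩
      _ = T := by simp
      _ ≤ M := (Nat.sInf_mem h).2.1
  · exact Nat.zero_le M

lemma one_le_matchCount (hJY : ∀ t, J t → Y t) (h : ∃ t, 1 ≤ t ∧ t ≤ M ∧ J t) :
    1 ≤ matchCount J Y M := by
  rw [matchCount, if_pos h, Nat.one_le_iff_ne_zero]
  have hT := Nat.sInf_mem h
  refine (Nat.card_pos_iff.2 ⟨⟨_, hT.1, le_rfl, hJY _ hT.2.2⟩, ?_⟩).ne'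
  exact (Set.finite_Icc 1 _).subset fun t ht => ⟨ht.1, ht.2.1⟩

lemma matchCount_congr {J' Y' : ℕ → Prop} (hJ : ∀ t ≤ M, J t ↔ J' t)
    (hY : ∀ t ≤ M, Y t ↔ Y' t) : matchCount J Y M = matchCount J' Y' M := by
  have hS : {s | 1 ≤ s ∧ s ≤ M ∧ J s} = {s | 1 ≤ s ∧ s ≤ M ∧ J' s} :=
    Set.ext fun s => and_congr_right fun _ => and_congr_right (hJ s)
  have hex : (∃ t, 1 ≤ t ∧ t ≤ M ∧ J t) ↔ ∃ t, 1 ≤ t ∧ t ≤ M ∧ J' t :=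
    exists_congr fun s => and_congr_right fun _ => and_congr_right (hJ s)
  unfold matchCount
  by_cases h : ∃ t, 1 ≤ t ∧ t ≤ M ∧ J t
  · have hTM := (Nat.sInf_mem h).2.1
    rw [if_pos h, if_pos (hex.1 h), ← hS]
    congr 2
    exact Set.ext fun t => and_congr_right fun _ =>
      and_congr_right fun (htT : t ≤ _) => hY t (htT.trans hTM)
  · rw [if_neg h, if_neg (mt hex.2 h)]

open Finset in
/-- The `Y`-matches counted by `matchCount` all precede the first `J`-match; when there is no
`J`-match up to `M`, the first one up to `K` (if any) is itself such a `Y`-match. -/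
lemma max_matchCount_one_le (hJY : ∀ t, J t → Y t) {K : ℕ} (hMK : M ≤ K) :
    max (matchCount J Y M) 1 ≤ #{t ∈ Icc 1 K | (∀ s ∈ Ico 1 t, ¬ J s) ∧ Y t} +
      if ∀ s ∈ Ico 1 (K + 1), ¬ J s then 1 else 0 := by
  by_cases h : ∃ t, 1 ≤ t ∧ t ≤ M ∧ J t
  · rw [max_eq_left (one_le_matchCount hJY h), matchCount, if_pos h]
    set S := {s | 1 ≤ s ∧ s ≤ M ∧ J s}
    have hTM : sInf S ≤ M := (Nat.sInf_mem h).2.1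
    refine le_add_right ((Nat.card_mono (finite_toSet _) fun t ht => ?_).trans_eq
      (Nat.card_eq_finsetCard _))
    obtain ⟨ht1, htT, hYt⟩ := ht
    simp only [coe_filter, mem_Icc, mem_Ico, Set.mem_ofPred_eq]
    refine ⟨⟨ht1, htT.trans (hTM.trans hMK)⟩, fun s hs hJs => ?_, hYt⟩
    exact absurd (Nat.sInf_le (show s ∈ S from ⟨hs.1, by omega, hJs⟩)) (by omega)
  · rw [matchCount, if_neg h, max_eq_right zero_le_one]
    split_ifs with hK
    · exact le_add_left le_rfl
    · push Not at hK
      have hex : ∃ t, 1 ≤ t ∧ t ≤ K ∧ J t := by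
        obtain ⟨t, ht, hJt⟩ := hK
        exact ⟨t, (mem_Ico.1 ht).1, Nat.lt_succ_iff.1 (mem_Ico.1 ht).2, hJt⟩
      have hT := Nat.find_spec hex
      refine le_add_right (card_pos.2 ⟨Nat.find hex, ?_⟩)
      simp only [mem_filter, mem_Icc, mem_Ico]
      refine ⟨⟨hT.1, hT.2.1⟩, fun s hs hJs => ?_, hJY _ hT.2.2⟩
      exact Nat.find_min hex hs.2 ⟨hs.1, by omega, hJs⟩

end MatchCount

/-- `matchCount` only looks at times `t ≤ M`, so it factors through a finite discrete space. -/
lemma measurable_matchCount {Ω : Type*} [MeasurableSpace Ω] {J Y : ℕ → Ω → Prop}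
    (hJ : ∀ t, MeasurableSet {ω | J t ω}) (hY : ∀ t, MeasurableSet {ω | Y t ω}) (M : ℕ) :
    Measurable fun ω => matchCount (J · ω) (Y · ω) M := by
  let G (v : Fin (M + 1) → Prop × Prop) : ℕ :=
    matchCount (fun t => ∃ h : t < M + 1, (v ⟨t, h⟩).1) (fun t => ∃ h : t < M + 1, (v ⟨t, h⟩).2) M
  have hG : (fun ω => matchCount (J · ω) (Y · ω) M) = G ∘ fun ω t => (J t ω, Y t ω) :=
    funext fun ω => matchCount_congr (fun t ht => by simp [Nat.lt_succ_of_le ht])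
      (fun t ht => by simp [Nat.lt_succ_of_le ht])
  rw [hG]
  exact Measurable.of_discrete.comp <| measurable_pi_lambda _ fun t =>
    (measurableSet_setOfPred.1 (hJ t)).prodMk (measurableSet_setOfPred.1 (hY t))

noncomputable def codeLength (k v : ℕ) : ℕ :=
  Nat.clog 2 (1 + k) + if 1 ≤ v ∧ v ≤ 2 ^ k - 1 then Nat.log 2 v else k

lemma codeLength_le (k v : ℕ) :
    (codeLength k v : ℝ) ≤
      Nat.clog 2 (1 + k) + Real.logb 2 ((max v 1 : ℕ) : ℝ) + if v = 0 then (k : ℝ) else 0 := by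
  rcases Nat.eq_zero_or_pos v with rfl | hv
  · simp [codeLength]
  have hlog : (Nat.log 2 v : ℝ) ≤ Real.logb 2 ((max v 1 : ℕ) : ℝ) := by
    rw [max_eq_left hv]
    exact_mod_cast Real.natLog_le_logb v 2
  rw [codeLength, if_neg hv.ne', add_zero, Nat.cast_add]
  gcongr
  split_ifs with hsmall
  · exact hlog
  · have hk : k ≤ Nat.log 2 v := Nat.le_log_of_pow_le one_lt_two (by omega)
    exact (Nat.cast_le.2 hk).trans hlog

section Integrals

variable {Ω : Type*} [MeasurableSpace Ω] {μ : Measure Ω}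

lemma integrable_comp_of_le [IsFiniteMeasure μ] {N : Ω → ℕ} (hN : Measurable N) {M : ℕ}
    (hNM : ∀ ω, N ω ≤ M) (f : ℕ → ℝ) : Integrable (fun ω => f (N ω)) μ :=
  .of_bound (Measurable.of_discrete.comp hN).aestronglyMeasurable
    (∑ v ∈ Finset.range (M + 1), ‖f v‖)
    (ae_of_all _ fun ω => Finset.single_le_sum (f := fun v => ‖f v‖) (fun _ _ => norm_nonneg _)
      (Finset.mem_range.2 (Nat.lt_succ_of_le (hNM ω))))

lemma setIntegral_indicator_one_of_subset {s S : Set Ω} (hS : MeasurableSet S) (hSs : S ⊆ s) :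
    ∫ ω in s, S.indicator 1 ω ∂μ = μ.real S := by
  rw [integral_indicator_one hS, measureReal_restrict_apply hS, Set.inter_eq_left.2 hSs]

end Integrals

noncomputable def backwardMatchCount {Ω : Type*} (B C : ℤ → Set Ω) (r : ℤ) (M : ℕ) (ω : Ω) :
    ℕ :=
  matchCount (fun t => ω ∈ B (r - t)) (fun t => ω ∈ C (r - t)) M

open Finset in
lemma max_backwardMatchCount_one_le {Ω : Type*} {B C : ℤ → Set Ω} (hBC : ∀ r, B r ⊆ C r)
    {r : ℤ} {ω : Ω} (hω : ω ∈ B r) {M K : ℕ} (hMK : M ≤ K) :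
    ((max (backwardMatchCount B C r M ω) 1 : ℕ) : ℝ) ≤
      ∑ t ∈ Icc 1 K, (noReturnBefore B r t ∩ C (r - t)).indicator 1 ω
        + (noReturnBefore B r (K + 1)).indicator 1 ω := by
  have h := max_matchCount_one_le (J := fun t => ω ∈ B (r - t)) (Y := fun t => ω ∈ C (r - t))
    (fun t h => hBC _ h) hMK
  refine ((Nat.cast_le (α := ℝ)).2 h).trans_eq ?_
  rw [Nat.cast_add, natCast_card_filter, Nat.cast_ite, Nat.cast_one, Nat.cast_zero]
  simp only [Set.indicator_apply, Set.mem_inter_iff, noReturnBefore.mem_iff, hω, true_and,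
    Pi.one_apply]
  congr!

section BackwardMatchCount

variable {Ω : Type*} [MeasurableSpace Ω] {μ : Measure Ω} {σ : Ω → Ω} {B C : ℤ → Set Ω}

open Finset

lemma measurable_backwardMatchCount (hBm : ∀ r, MeasurableSet (B r))
    (hCm : ∀ r, MeasurableSet (C r)) (r : ℤ) (M : ℕ) : Measurable (backwardMatchCount B C r M) :=
  measurable_matchCount (fun _ => hBm _) (fun _ => hCm _) M

lemma integrableOn_comp_backwardMatchCount [IsFiniteMeasure μ] (hBm : ∀ r, MeasurableSet (B r))
    (hCm : ∀ r, MeasurableSet (C r)) (r : ℤ) (M : ℕ) (f : ℕ → ℝ) (s : Set Ω) :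
    IntegrableOn (fun ω => f (backwardMatchCount B C r M ω)) s μ :=
  integrable_comp_of_le (measurable_backwardMatchCount hBm hCm r M)
    (fun _ => matchCount_le _ _ _) f

variable [IsProbabilityMeasure μ] (hσ : MeasurePreserving σ μ μ)
    (hB : ∀ r, σ ⁻¹' B r = B (r + 1)) (hC : ∀ r, σ ⁻¹' C r = C (r + 1))
    (hBm : ∀ r, MeasurableSet (B r)) (hCm : ∀ r, MeasurableSet (C r)) (hBC : ∀ r, B r ⊆ C r)
include hσ hB hC hBm hCm hBC

theorem setIntegral_max_backwardMatchCount_one_le_add {r : ℤ} {M K : ℕ} (hMK : M ≤ K) :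
    ∫ ω in B r, ((max (backwardMatchCount B C r M ω) 1 : ℕ) : ℝ) ∂μ
      ≤ μ.real (C r) + 1 / (K + 1) := by
  set D : ℕ → Set Ω := fun t => noReturnBefore B r t ∩ C (r - t)
  set U := noReturnBefore B r (K + 1)
  have hDm (t : ℕ) : MeasurableSet (D t) := (noReturnBefore.measurableSet hBm r t).inter (hCm _)
  have hUm : MeasurableSet U := noReturnBefore.measurableSet hBm r _
  have hDi (t : ℕ) : Integrable ((D t).indicator 1) (μ.restrict (B r)) :=
    (integrable_const (1 : ℝ)).indicator (hDm t)
  have hUi : Integrable (U.indicator 1) (μ.restrict (B r)) :=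
    (integrable_const (1 : ℝ)).indicator hUm
  calc _ ≤ ∫ ω in B r, (∑ t ∈ Icc 1 K, (D t).indicator 1 ω + U.indicator 1 ω) ∂μ :=
        setIntegral_mono_on
          (integrableOn_comp_backwardMatchCount hBm hCm r M (fun v => ((max v 1 : ℕ) : ℝ)) _)
          ((integrable_finsetSum (Icc 1 K) fun t _ => hDi t).fun_add hUi) (hBm r)
          fun ω hω => max_backwardMatchCount_one_le hBC hω hMK
    _ = ∑ t ∈ Icc 1 K, μ.real (D t) + μ.real U := by
        rw [integral_add (integrable_finsetSum _ fun t _ => hDi t) hUi,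
          integral_finsetSum _ fun t _ => hDi t,
          setIntegral_indicator_one_of_subset hUm (noReturnBefore.subset r _)]
        congr 1
        exact sum_congr rfl fun t _ => setIntegral_indicator_one_of_subset (hDm t)
          (Set.inter_subset_left.trans (noReturnBefore.subset r t))
    _ ≤ _ := add_le_add (sum_measureReal_noReturnBefore_inter_le hσ hB hC hBm hCm r K)
        (measureReal_noReturnBefore_succ_le hσ hB hBm r K)

theorem setIntegral_max_backwardMatchCount_one_le (r : ℤ) (M : ℕ) :
    ∫ ω in B r, ((max (backwardMatchCount B C r M ω) 1 : ℕ) : ℝ) ∂μ ≤ μ.real (C r) := by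
  refine ge_of_tendsto ?_ (Filter.eventually_atTop.2 ⟨M, fun K hMK =>
    setIntegral_max_backwardMatchCount_one_le_add hσ hB hC hBm hCm hBC hMK⟩)
  simpa using (tendsto_one_div_add_atTop_nhds_zero_nat (𝕜 := ℝ)).const_add (μ.real (C r))

theorem setIntegral_logb_max_backwardMatchCount_one_le (r : ℤ) (M : ℕ)
    (hpos : 0 < μ.real (B r)) :
    ∫ ω in B r, Real.logb 2 ((max (backwardMatchCount B C r M ω) 1 : ℕ) : ℝ) ∂μ
      ≤ μ.real (B r) * Real.logb 2 (μ.real (C r) / μ.real (B r)) := by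
  set f : Ω → ℝ := fun ω => ((max (backwardMatchCount B C r M ω) 1 : ℕ) : ℝ)
  have hf : ∀ᵐ ω ∂μ.restrict (B r), f ω ∈ Set.Ici 1 := ae_of_all _ fun ω => by simp [f]
  have h0 : μ (B r) ≠ 0 := (measureReal_ne_zero_iff (measure_ne_top _ _)).1 hpos.ne'
  have hfi := integrableOn_comp_backwardMatchCount hBm hCm r M (fun v => ((max v 1 : ℕ) : ℝ))
    (B r) (μ := μ)
  have hconcave : ConcaveOn ℝ (Set.Ici 1) (Real.logb 2) :=
    ((strictConcaveOn_log_Ioi.concaveOn.subset (Set.Ici_subset_Ioi.2 one_pos) (convex_Ici 1)).smul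
      (inv_nonneg.2 (Real.log_nonneg one_le_two))).congr fun x _ => by
        simp [Real.logb, div_eq_inv_mul]
  have hJensen := hconcave.le_map_set_average
    (Real.continuousOn_logb.mono fun x (hx : 1 ≤ x) => by simp; positivity) isClosed_Ici h0
    (measure_ne_top _ _) hf hfi
    (integrableOn_comp_backwardMatchCount hBm hCm r M (fun v => Real.logb 2 ((max v 1 : ℕ) : ℝ)) _)
  have hone : 1 ≤ ⨍ ω in B r, f ω ∂μ :=
    (convex_Ici 1).set_average_mem isClosed_Ici h0 (measure_ne_top _ _) hf hfi
  have havg : ⨍ ω in B r, f ω ∂μ ≤ μ.real (C r) / μ.real (B r) := by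
    rw [setAverage_eq, smul_eq_mul, inv_mul_eq_div]
    gcongr
    exact setIntegral_max_backwardMatchCount_one_le hσ hB hC hBm hCm hBC r M
  calc ∫ ω in B r, Real.logb 2 (f ω) ∂μ = μ.real (B r) * ⨍ ω in B r, Real.logb 2 (f ω) ∂μ := by
        rw [setAverage_eq, smul_eq_mul, ← mul_assoc, mul_inv_cancel₀ hpos.ne', one_mul]
    _ ≤ μ.real (B r) * Real.logb 2 (⨍ ω in B r, f ω ∂μ) := by gcongr
    _ ≤ _ := by gcongr; linarith

theorem setIntegral_codeLength_backwardMatchCount_le (r : ℤ) (M k : ℕ)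
    (hpos : 0 < μ.real (B r)) :
    ∫ ω in B r, (codeLength k (backwardMatchCount B C r M ω) : ℝ) ∂μ ≤
      μ.real (B r) * (Nat.clog 2 (1 + k) + Real.logb 2 (μ.real (C r) / μ.real (B r)))
        + k / (M + 1) := by
  set N := backwardMatchCount B C r M
  set U := noReturnBefore B r (M + 1)
  have hUm : MeasurableSet U := noReturnBefore.measurableSet hBm r _
  have hlogi := integrableOn_comp_backwardMatchCount hBm hCm r M
    (fun v => Real.logb 2 ((max v 1 : ℕ) : ℝ)) (B r) (μ := μ)
  have hUi : Integrable (U.indicator 1) (μ.restrict (B r)) :=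
    (integrable_const (1 : ℝ)).indicator hUm
  have hpt (ω) (hω : ω ∈ B r) : (codeLength k (N ω) : ℝ) ≤
      Nat.clog 2 (1 + k) + Real.logb 2 ((max (N ω) 1 : ℕ) : ℝ) + k * U.indicator 1 ω := by
    refine (codeLength_le k (N ω)).trans (add_le_add le_rfl ?_)
    split_ifs with h0
    · have hU : ω ∈ U := noReturnBefore.mem_iff.2 ⟨hω, fun s hs hBs => by
        have := one_le_matchCount (J := fun t => ω ∈ B (r - t)) (Y := fun t => ω ∈ C (r - t))
          (M := M) (fun t h => hBC _ h) ⟨s, (mem_Ico.1 hs).1,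
            Nat.lt_succ_iff.1 (mem_Ico.1 hs).2, hBs⟩
        exact absurd h0 (by simp only [N, backwardMatchCount]; omega)⟩
      simp [Set.indicator_of_mem hU]
    · exact mul_nonneg k.cast_nonneg (Set.indicator_nonneg (fun _ _ => zero_le_one) ω)
  calc ∫ ω in B r, (codeLength k (N ω) : ℝ) ∂μ
      ≤ ∫ ω in B r, (Nat.clog 2 (1 + k) + Real.logb 2 ((max (N ω) 1 : ℕ) : ℝ)
          + k * U.indicator 1 ω) ∂μ :=
        setIntegral_mono_on
          (integrableOn_comp_backwardMatchCount hBm hCm r M (fun v => (codeLength k v : ℝ)) _)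
          (((integrable_const _).fun_add hlogi).fun_add (hUi.const_mul _)) (hBm r) hpt
    _ = μ.real (B r) * Nat.clog 2 (1 + k)
          + ∫ ω in B r, Real.logb 2 ((max (N ω) 1 : ℕ) : ℝ) ∂μ + k * μ.real U := by
        rw [integral_add ((integrable_const _).fun_add hlogi) (hUi.const_mul _),
          integral_add (integrable_const _) hlogi, setIntegral_const, smul_eq_mul,
          integral_const_mul, setIntegral_indicator_one_of_subset hUm (noReturnBefore.subset r _)]
    _ ≤ μ.real (B r) * Nat.clog 2 (1 + k)
          + μ.real (B r) * Real.logb 2 (μ.real (C r) / μ.real (B r)) + k * (1 / (M + 1)) := by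
        gcongr
        · exact setIntegral_logb_max_backwardMatchCount_one_le hσ hB hC hBm hCm hBC r M hpos
        · exact measureReal_noReturnBefore_succ_le hσ hB hBm r M
    _ = _ := by ring

theorem setIntegral_codeLength_backwardMatchCount_div_le (r : ℤ) (M k : ℕ)
    (hpos : 0 < μ.real (B r)) :
    (∫ ω in B (r + M), (codeLength k (backwardMatchCount B C (r + M) M ω) : ℝ) ∂μ)
        / μ.real (B (r + M))
      ≤ -Real.logb 2 (μ.real (B r) / μ.real (C r)) + Nat.clog 2 (1 + k)
        + k / (((M + 1 : ℕ) : ℝ) * μ.real (B r)) := by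
  have hBr := measureReal_add_of_preimage_eq hσ hB hBm r M
  have key := setIntegral_codeLength_backwardMatchCount_le hσ hB hC hBm hCm hBC (r + M) M k
    (hBr ▸ hpos)
  rw [hBr, measureReal_add_of_preimage_eq hσ hC hCm r M] at key
  rw [hBr, div_le_iff₀ hpos, ← Real.logb_inv, inv_div, Nat.cast_add_one]
  refine key.trans_eq ?_
  field_simp
  ring

end BackwardMatchCount

def blockEvent {Ω A : Type*} {L : ℕ} (X : ℤ → Ω → A) (x : Fin L → A) (r : ℤ) : Set Ω :=
  {ω | ∀ j : Fin L, X (r + (j : ℕ)) ω = x j}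

section BlockEvent

variable {Ω A : Type*} {L : ℕ} {X : ℤ → Ω → A} {x : Fin L → A}

lemma preimage_blockEvent {σ : Ω → Ω} (hX : ∀ n ω, X n (σ ω) = X (n + 1) ω) (r : ℤ) :
    σ ⁻¹' blockEvent X x r = blockEvent X x (r + 1) := by
  ext ω
  simp [blockEvent, hX, add_right_comm]

lemma mem_blockEvent_sub_iff {ω : Ω} {r : ℤ} (hω : ω ∈ blockEvent X x r) (t : ℕ) :
    ω ∈ blockEvent X x (r - t) ↔ ∀ j : Fin L, X (r + (j : ℕ) - t) ω = X (r + (j : ℕ)) ω := by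
  simp only [blockEvent, Set.mem_ofPred_eq, hω _, sub_add_eq_add_sub]

lemma measurableSet_blockEvent [MeasurableSpace Ω] [MeasurableSpace A]
    [MeasurableSingletonClass A] (hmX : ∀ n, Measurable (X n)) (r : ℤ) :
    MeasurableSet (blockEvent X x r) := by
  simp only [blockEvent, Set.ofPred_forall]
  exact .iInter fun j => hmX _ (measurableSet_singleton _)

end BlockEvent

theorem stmt_9_general {Ω A B : Type*} [MeasurableSpace Ω]
    (μ : Measure Ω) [IsProbabilityMeasure μ]
    [MeasurableSpace A] [MeasurableSingletonClass A]
    [MeasurableSpace B] [MeasurableSingletonClass B]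
    (X : ℤ → Ω → A) (Y : ℤ → Ω → B)
    (hmX : ∀ n, Measurable (X n)) (hmY : ∀ n, Measurable (Y n))
    (σ : Ω → Ω) (hσ : MeasurePreserving σ μ μ)
    (hX : ∀ n ω, X n (σ ω) = X (n + 1) ω)
    (hY : ∀ n ω, Y n (σ ω) = Y (n + 1) ω)
    (L : ℕ) (k : ℕ)
    (i : ℕ)
    (x : Fin L → A) (y : Fin L → B)
    -- events for the values of the blocks at positions 1, …, L
    (Exy Ey : Set Ω)
    (hExy : Exy = {ω | ∀ j : Fin L,
      X (1 + (j : ℕ) : ℤ) ω = x j ∧ Y (1 + (j : ℕ) : ℤ) ω = y j})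
    (hEy : Ey = {ω | ∀ j : Fin L, Y (1 + (j : ℕ) : ℤ) ω = y j})
    (hpos : 0 < μ Exy)
    -- event for the values of the `i`-th phrase
    (E : Set Ω)
    (hE : E = {ω | ∀ j : Fin L,
      X (((i - 1) * L + 1 + (j : ℕ) : ℕ) : ℤ) ω = x j ∧
      Y (((i - 1) * L + 1 + (j : ℕ) : ℕ) : ℤ) ω = y j})
    -- joint / side-information matches of the `i`-th phrase at backward offset `t`
    (jm ym : ℕ → Ω → Prop)
    (hjm : ∀ t ω, jm t ω ↔ ∀ j : Fin L,
      X (((i - 1) * L + 1 + (j : ℕ) : ℕ) - (t : ℕ) : ℤ) ω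
          = X (((i - 1) * L + 1 + (j : ℕ) : ℕ) : ℤ) ω ∧
      Y (((i - 1) * L + 1 + (j : ℕ) : ℕ) - (t : ℕ) : ℤ) ω
          = Y (((i - 1) * L + 1 + (j : ℕ) : ℕ) : ℤ) ω)
    (hym : ∀ t ω, ym t ω ↔ ∀ j : Fin L,
      Y (((i - 1) * L + 1 + (j : ℕ) : ℕ) - (t : ℕ) : ℤ) ω
          = Y (((i - 1) * L + 1 + (j : ℕ) : ℕ) : ℤ) ω)
    -- the number of Y-matches up to the most recent joint match, and the codelength
    (n : Ω → ℕ)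
    (hn : ∀ ω, n ω = if ∃ t : ℕ, 1 ≤ t ∧ t ≤ (i - 1) * L ∧ jm t ω
      then Nat.card {t : ℕ | 1 ≤ t ∧
        t ≤ sInf {s : ℕ | 1 ≤ s ∧ s ≤ (i - 1) * L ∧ jm s ω} ∧ ym t ω}
      else 0)
    (len : Ω → ℕ)
    (hlen : ∀ ω, len ω = Nat.clog 2 (1 + k) +
      (if 1 ≤ n ω ∧ n ω ≤ 2 ^ k - 1 then Nat.log 2 (n ω) else k)) :
    (∫ ω in E, (len ω : ℝ) ∂μ) / (μ E).toReal
      ≤ -Real.logb 2 ((μ Exy).toReal / (μ Ey).toReal) + (Nat.clog 2 (1 + k) : ℝ)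
        + (k : ℝ) / ((((i - 1) * L + 1 : ℕ) : ℝ) * (μ Exy).toReal) := by
  set M := (i - 1) * L
  set Bxy : ℤ → Set Ω := fun r => blockEvent X x r ∩ blockEvent Y y r
  have hBxy r : σ ⁻¹' Bxy r = Bxy (r + 1) := by
    simp only [Bxy, Set.preimage_inter, preimage_blockEvent hX, preimage_blockEvent hY]
  have hBxym r : MeasurableSet (Bxy r) :=
    (measurableSet_blockEvent hmX r).inter (measurableSet_blockEvent hmY r)
  have hcast (j : ℕ) : ((M + 1 + j : ℕ) : ℤ) = (1 + M : ℤ) + j := by push_cast; ring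
  have hE' : E = Bxy (1 + M) := by subst hE; ext ω; simp only [hcast]; exact forall_and
  have hExy' : Exy = Bxy 1 := by subst hExy; ext ω; exact forall_and
  have hlen' : Set.EqOn (fun ω => (len ω : ℝ))
      (fun ω => (codeLength k (backwardMatchCount Bxy (blockEvent Y y) (1 + M) M ω) : ℝ))
      (Bxy (1 + M)) := fun ω hω => by
    have hjm' t : jm t ω ↔ ω ∈ Bxy (1 + M - t) := by
      simp only [hjm, hcast, forall_and, Bxy, Set.mem_inter_iff,
        mem_blockEvent_sub_iff hω.1, mem_blockEvent_sub_iff hω.2]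
    have hym' t : ym t ω ↔ ω ∈ blockEvent Y y (1 + M - t) := by
      simp only [hym, hcast, mem_blockEvent_sub_iff hω.2]
    simp only [hlen, hn, codeLength, backwardMatchCount, ← hjm', ← hym']
    rfl
  subst hE' hExy' hEy
  rw [setIntegral_congr_fun (hBxym _) hlen']
  exact setIntegral_codeLength_backwardMatchCount_div_le hσ hBxy (preimage_blockEvent hY) hBxym
    (measurableSet_blockEvent hmY) (fun _ => Set.inter_subset_right) 1 M k
    (ENNReal.toReal_pos hpos.ne' (measure_ne_top _ _))

/-- Per-phrase codelength bound for Algorithm 1.  With `k = ⌈L log₂ |𝒜|⌉`, the expected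
codelength of the `i`-th phrase, conditioned on the phrase values `(x, y)`, is at most
`ı(x|y) + ⌈log₂(1+k)⌉ + k / (((i-1)L+1) P[X₁^L = x, Y₁^L = y])`, where
`ı(x|y) = -log₂ P[X₁^L = x | Y₁^L = y]`. -/
theorem stmt_9 {Ω A B : Type*} [MeasurableSpace Ω]
    (μ : Measure Ω) [IsProbabilityMeasure μ]
    [Fintype A] [Fintype B]
    [MeasurableSpace A] [MeasurableSingletonClass A]
    [MeasurableSpace B] [MeasurableSingletonClass B]
    (X : ℤ → Ω → A) (Y : ℤ → Ω → B)
    (hmX : ∀ n, Measurable (X n)) (hmY : ∀ n, Measurable (Y n))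
    (σ : Ω → Ω) (hσ : MeasurePreserving σ μ μ)
    (hX : ∀ n ω, X n (σ ω) = X (n + 1) ω)
    (hY : ∀ n ω, Y n (σ ω) = Y (n + 1) ω)
    (L : ℕ) (hL : 1 ≤ L) (k : ℕ)
    (hk : (k : ℤ) = ⌈(L : ℝ) * Real.logb 2 (Fintype.card A)⌉)
    (i : ℕ) (hi : 2 ≤ i)
    (x : Fin L → A) (y : Fin L → B)
    -- events for the values of the blocks at positions 1, …, L
    (Exy Ey : Set Ω)
    (hExy : Exy = {ω | ∀ j : Fin L,
      X (1 + (j : ℕ) : ℤ) ω = x j ∧ Y (1 + (j : ℕ) : ℤ) ω = y j})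
    (hEy : Ey = {ω | ∀ j : Fin L, Y (1 + (j : ℕ) : ℤ) ω = y j})
    (hpos : 0 < μ Exy)
    -- event for the values of the `i`-th phrase
    (E : Set Ω)
    (hE : E = {ω | ∀ j : Fin L,
      X (((i - 1) * L + 1 + (j : ℕ) : ℕ) : ℤ) ω = x j ∧
      Y (((i - 1) * L + 1 + (j : ℕ) : ℕ) : ℤ) ω = y j})
    -- joint / side-information matches of the `i`-th phrase at backward offset `t`
    (jm ym : ℕ → Ω → Prop)
    (hjm : ∀ t ω, jm t ω ↔ ∀ j : Fin L,
      X (((i - 1) * L + 1 + (j : ℕ) : ℕ) - (t : ℕ) : ℤ) ω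
          = X (((i - 1) * L + 1 + (j : ℕ) : ℕ) : ℤ) ω ∧
      Y (((i - 1) * L + 1 + (j : ℕ) : ℕ) - (t : ℕ) : ℤ) ω
          = Y (((i - 1) * L + 1 + (j : ℕ) : ℕ) : ℤ) ω)
    (hym : ∀ t ω, ym t ω ↔ ∀ j : Fin L,
      Y (((i - 1) * L + 1 + (j : ℕ) : ℕ) - (t : ℕ) : ℤ) ω
          = Y (((i - 1) * L + 1 + (j : ℕ) : ℕ) : ℤ) ω)
    -- the number of Y-matches up to the most recent joint match, and the codelength
    (n : Ω → ℕ)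
    (hn : ∀ ω, n ω = if ∃ t : ℕ, 1 ≤ t ∧ t ≤ (i - 1) * L ∧ jm t ω
      then Nat.card {t : ℕ | 1 ≤ t ∧
        t ≤ sInf {s : ℕ | 1 ≤ s ∧ s ≤ (i - 1) * L ∧ jm s ω} ∧ ym t ω}
      else 0)
    (len : Ω → ℕ)
    (hlen : ∀ ω, len ω = Nat.clog 2 (1 + k) +
      (if 1 ≤ n ω ∧ n ω ≤ 2 ^ k - 1 then Nat.log 2 (n ω) else k)) :
    (∫ ω in E, (len ω : ℝ) ∂μ) / (μ E).toReal
      ≤ -Real.logb 2 ((μ Exy).toReal / (μ Ey).toReal) + (Nat.clog 2 (1 + k) : ℝ)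
        + (k : ℝ) / ((((i - 1) * L + 1 : ℕ) : ℝ) * (μ Exy).toReal) :=
  stmt_9_general μ X Y hmX hmY σ hσ hX hY L k i x y Exy Ey hExy hEy hpos E hE jm ym hjm hym n hn len
    hlen
end
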